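/- arXiv:2407.17413 — 6 statements merged into one kernel-verified Lean document; each statement's English description precedes it below -/
import Mathlib

section
/- Let G=(V,E) be a graph of convex sets with origin s and destination d, suppose there exists at least one path from s to d, let h be an admissible heuristic, and let S be any cut-set. Then N_S is nonempty and C_opt(s,d) ≥ C*_opt(S, N_S). -/
open scoped BigOperators Pointwise Classical

noncomputable section

/-- A graph of convex sets: a finite directed edge set together with a nonempty
compact convex set in `ℝ^n` attached to each vertex. -/
structure GCS (V : Type*) (n : ℕ) where
  E : Finset (V × V)
  X : V → Set (EuclideanSpace ℝ (Fin n))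
  nonempty : ∀ v, (X v).Nonempty
  compact : ∀ v, IsCompact (X v)
  convex : ∀ v, Convex ℝ (X v)

/-- The cost of a path of `k` vertices with chosen points `x 0, …, x (k-1)`. -/
def pathCost {n : ℕ} (k : ℕ) (x : ℕ → EuclideanSpace ℝ (Fin n)) : ℝ :=
  ∑ i ∈ Finset.range (k - 1), ‖x i - x (i + 1)‖

namespace GCS

variable {V : Type*} {n : ℕ}

/-- `(v 0, …, v (k-1))` is a path in `G` with chosen points `x i ∈ X (v i)`. -/
def IsPathOn (G : GCS V n) (k : ℕ) (v : ℕ → V) (x : ℕ → EuclideanSpace ℝ (Fin n)) : Prop :=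
  1 ≤ k ∧ (∀ i, i + 1 < k → (v i, v (i + 1)) ∈ G.E) ∧ ∀ i, i < k → x i ∈ G.X (v i)

/-- `C_opt(a,b)`: the infimum of path costs over all paths from `a` to `b`
and all choices of points (`⊤` if no such path exists). -/
def Copt (G : GCS V n) (a b : V) : EReal :=
  sInf {c : EReal | ∃ (k : ℕ) (v : ℕ → V) (x : ℕ → EuclideanSpace ℝ (Fin n)),
    G.IsPathOn k v x ∧ v 0 = a ∧ v (k - 1) = b ∧ c = ((pathCost k x : ℝ) : EReal)}

/-- A heuristic `h` is admissible for destination `d`. -/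
def Admissible (G : GCS V n) (d : V) (h : V → ℝ) : Prop :=
  h d = 0 ∧ ∀ v : V, (h v : EReal) ≤ G.Copt v d

/-- The neighborhood `N_S` of a set `S` of vertices. -/
def nbr [Fintype V] (G : GCS V n) (S : Finset V) : Finset V :=
  Finset.univ.filter fun v => v ∉ S ∧ ∃ u ∈ S, (u, v) ∈ G.E

/-- `C*_opt(S,S')`: the infimum over all paths starting at `s`, staying in `S` except
for the last vertex, and ending at a terminal vertex in `S'`, of the path cost plus the
heuristic value of the terminal vertex. -/
def CstarOpt (G : GCS V n) (h : V → ℝ) (s : V) (S S' : Finset V) : EReal :=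
  sInf {c : EReal | ∃ (k : ℕ) (v : ℕ → V) (x : ℕ → EuclideanSpace ℝ (Fin n)),
    G.IsPathOn k v x ∧ v 0 = s ∧ (∀ i, i < k - 1 → v i ∈ S) ∧ v (k - 1) ∈ S' ∧
    c = ((pathCost k x + h (v (k - 1)) : ℝ) : EReal)}

/-- The edge set `Ē` of the subgraph used by SPP*-GCS: edges leaving `S` into `S ∪ S'`. -/
def Ebar (G : GCS V n) (S S' : Finset V) : Finset (V × V) :=
  G.E.filter fun e => e.1 ∈ S ∧ e.2 ∈ S ∪ S'

end GCS

/-- The perspective `X̄ = {(x, λ) : λ ≥ 0, x ∈ λX}` of a set `X ⊆ ℝ^n`. -/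
def persp {n : ℕ} (X : Set (EuclideanSpace ℝ (Fin n))) :
    Set (EuclideanSpace ℝ (Fin n) × ℝ) :=
  {p | 0 ≤ p.2 ∧ p.1 ∈ p.2 • X}

namespace GCS

variable {V : Type*} {n : ℕ}

/-- Feasibility for the convex relaxation of SPP*-GCS on `(S, S')`. -/
def RelaxFeasible (G : GCS V n) (s : V) (S S' : Finset V)
    (y : V × V → ℝ) (α : V → ℝ) (z z' : V × V → EuclideanSpace ℝ (Fin n)) : Prop :=
  (∀ e ∈ G.Ebar S S', y e ∈ Set.Icc (0 : ℝ) 1) ∧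
  (∀ v ∈ S', α v ∈ Set.Icc (0 : ℝ) 1) ∧
  (∑ v ∈ S', α v) = 1 ∧
  (∑ e ∈ (G.Ebar S S').filter fun e => e.1 = s, y e) = 1 ∧
  (∀ v ∈ S', (∑ e ∈ (G.Ebar S S').filter fun e => e.2 = v, y e) = α v) ∧
  (∀ v ∈ S, v ≠ s →
    (∑ e ∈ (G.Ebar S S').filter fun e => e.2 = v, z' e)
      = (∑ e ∈ (G.Ebar S S').filter fun e => e.1 = v, z e) ∧
    (∑ e ∈ (G.Ebar S S').filter fun e => e.2 = v, y e)
      = (∑ e ∈ (G.Ebar S S').filter fun e => e.1 = v, y e)) ∧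
  (∀ e ∈ G.Ebar S S', (z e, y e) ∈ persp (G.X e.1) ∧ (z' e, y e) ∈ persp (G.X e.2))

/-- The objective of the convex relaxation of SPP*-GCS. -/
def relaxObj (G : GCS V n) (h : V → ℝ) (S S' : Finset V)
    (y : V × V → ℝ) (α : V → ℝ) (z z' : V × V → EuclideanSpace ℝ (Fin n)) : ℝ :=
  (∑ e ∈ G.Ebar S S', ‖z e - z' e‖) + ∑ v ∈ S', α v * h v

/-- `R*_opt(S,S')`: the optimal value of the convex relaxation of SPP*-GCS. -/
def RstarOpt (G : GCS V n) (h : V → ℝ) (s : V) (S S' : Finset V) : EReal :=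
  sInf {c : EReal | ∃ y α z z', G.RelaxFeasible s S S' y α z z' ∧
    c = ((G.relaxObj h S S' y α z z' : ℝ) : EReal)}

/-- The optimal value of the MICP for SPP*-GCS (the relaxation with binary `y` and `α`). -/
def MICPval (G : GCS V n) (h : V → ℝ) (s : V) (S S' : Finset V) : EReal :=
  sInf {c : EReal | ∃ y α z z', G.RelaxFeasible s S S' y α z z' ∧
    (∀ e ∈ G.Ebar S S', y e = 0 ∨ y e = 1) ∧
    (∀ v ∈ S', α v = 0 ∨ α v = 1) ∧
    c = ((G.relaxObj h S S' y α z z' : ℝ) : EReal)}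

end GCS

end


private lemma stmt2_key {V : Type*} [Fintype V] {n : ℕ} (G : GCS V n) (s d : V) (h : V → ℝ)
    (hadm : G.Admissible d h)
    (S : Finset V) (hs : s ∈ S) (hd : d ∉ S)
    (k : ℕ) (v : ℕ → V) (x : ℕ → EuclideanSpace ℝ (Fin n))
    (hp : G.IsPathOn k v x) (h0 : v 0 = s) (hend : v (k - 1) = d) :
    ∃ j : ℕ, v j ∈ G.nbr S ∧
      G.CstarOpt h s S (G.nbr S) ≤ ((pathCost k x : ℝ) : EReal) := by
  obtain ⟨hk1, hE, hX⟩ := hp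
  have hex : ∃ m, m < k ∧ v m ∉ S := ⟨k - 1, Nat.sub_lt hk1 one_pos, hend ▸ hd⟩
  set j := Nat.find hex with hjdef
  obtain ⟨hjk, hjS⟩ := Nat.find_spec hex
  have hmin : ∀ i, i < j → v i ∈ S := by
    intro i hi
    have := Nat.find_min hex hi
    push_neg at this
    exact this (lt_trans hi hjk)
  rw [← hjdef] at hjk hjS
  have hj1 : 1 ≤ j := by
    rcases Nat.eq_zero_or_pos j with h0' | h0'
    · rw [h0'] at hjS
      exact absurd (by rw [h0]; exact hs) hjS
    · exact h0'
  have hj1' : j - 1 + 1 = j := Nat.succ_pred_eq_of_pos hj1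
  have hnbr : v j ∈ G.nbr S := by
    refine Finset.mem_filter.mpr ⟨Finset.mem_univ _, hjS, v (j - 1), hmin _ (by omega), ?_⟩
    have := hE (j - 1) (by omega)
    rwa [hj1'] at this
  refine ⟨j, hnbr, ?_⟩
  -- suffix path cost
  set c₂ : ℝ := pathCost (k - j) (fun i => x (j + i)) with hc2
  have hsuffix : G.Copt (v j) d ≤ ((c₂ : ℝ) : EReal) := by
    apply sInf_le
    refine ⟨k - j, fun i => v (j + i), fun i => x (j + i), ⟨by omega, ?_, ?_⟩, by simp, ?_, rfl⟩
    · intro i hi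
      exact hE (j + i) (by omega)
    · intro i hi
      exact hX (j + i) (by omega)
    · have : j + (k - j - 1) = k - 1 := by omega
      simp only [this, hend]
  have hhle : h (v j) ≤ c₂ := by
    have := le_trans (hadm.2 (v j)) hsuffix
    exact_mod_cast this
  have hsplit : pathCost k x = pathCost (j + 1) x + c₂ := by
    have hle : j ≤ k - 1 := by omega
    rw [hc2]
    unfold pathCost
    rw [Nat.add_sub_cancel]
    rw [Finset.range_eq_Ico, ← Finset.sum_Ico_consecutive _ (Nat.zero_le j) hle,
      ← Finset.range_eq_Ico, Finset.sum_Ico_eq_sum_range]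
    have : k - j - 1 = k - 1 - j := by omega
    rw [this]
    rfl
  have hmem : ((pathCost (j + 1) x + h (v j) : ℝ) : EReal) ∈
      {c : EReal | ∃ (k' : ℕ) (v' : ℕ → V) (x' : ℕ → EuclideanSpace ℝ (Fin n)),
        G.IsPathOn k' v' x' ∧ v' 0 = s ∧ (∀ i, i < k' - 1 → v' i ∈ S) ∧
        v' (k' - 1) ∈ G.nbr S ∧
        c = ((pathCost k' x' + h (v' (k' - 1)) : ℝ) : EReal)} := by
    refine ⟨j + 1, v, x, ⟨by omega, ?_, ?_⟩, h0, ?_, ?_, ?_⟩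
    · intro i hi; exact hE i (by omega)
    · intro i hi; exact hX i (by omega)
    · simpa using hmin
    · simpa using hnbr
    · simp
  calc G.CstarOpt h s S (G.nbr S) ≤ ((pathCost (j + 1) x + h (v j) : ℝ) : EReal) :=
        sInf_le hmem
    _ ≤ ((pathCost k x : ℝ) : EReal) := by
        apply EReal.coe_le_coe_iff.mpr
        rw [hsplit]
        linarith

/-- For any cut-set `S`, the neighborhood `N_S` is nonempty and
`C_opt(s,d) ≥ C*_opt(S, N_S)`. -/
theorem stmt2 {V : Type*} [Fintype V] {n : ℕ} (G : GCS V n) (s d : V) (h : V → ℝ)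
    (hadm : G.Admissible d h)
    (hpath : ∃ (k : ℕ) (v : ℕ → V) (x : ℕ → EuclideanSpace ℝ (Fin n)),
      G.IsPathOn k v x ∧ v 0 = s ∧ v (k - 1) = d)
    (S : Finset V) (hs : s ∈ S) (hd : d ∉ S) :
    (G.nbr S).Nonempty ∧ G.CstarOpt h s S (G.nbr S) ≤ G.Copt s d := by
  obtain ⟨k, v, x, hp, h0, hend⟩ := hpath
  obtain ⟨j, hj, hle⟩ := stmt2_key G s d h hadm S hs hd k v x hp h0 hend
  refine ⟨⟨v j, hj⟩, ?_⟩
  rw [GCS.Copt]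
  apply le_sInf
  rintro c ⟨k', v', x', hp', h0', hend', rfl⟩
  obtain ⟨j', hj', hle'⟩ := stmt2_key G s d h hadm S hs hd k' v' x' hp' h0' hend'
  exact hle'
end

section
/- Let G=(V,E) be a graph of convex sets with origin s and destination d, suppose there exists at least one path from s to d, let h be an admissible heuristic, and let S be a cut-set with d ∈ N_S and N_S∖{d} ≠ ∅. Then C_opt(s,d) ≥ min( C*_opt(S, N_S∖{d}), C*_opt(S, {d}) ). -/
open scoped BigOperators Pointwise Classical

/-- For a cut-set `S` with `d ∈ N_S` and `N_S \ {d} ≠ ∅`,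
`C_opt(s,d) ≥ min(C*_opt(S, N_S \ {d}), C*_opt(S, {d}))`. -/
theorem stmt3 {V : Type*} [Fintype V] {n : ℕ} (G : GCS V n) (s d : V) (h : V → ℝ)
    (hadm : G.Admissible d h)
    (hpath : ∃ (k : ℕ) (v : ℕ → V) (x : ℕ → EuclideanSpace ℝ (Fin n)),
      G.IsPathOn k v x ∧ v 0 = s ∧ v (k - 1) = d)
    (S : Finset V) (hs : s ∈ S) (hd : d ∉ S)
    (hdN : d ∈ G.nbr S) (hne : (G.nbr S \ {d}).Nonempty) :
    min (G.CstarOpt h s S (G.nbr S \ {d})) (G.CstarOpt h s S {d}) ≤ G.Copt s d := by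
  refine le_sInf ?_
  rintro c ⟨k, v, x, ⟨hk1, hE, hX⟩, hv0, hvd, rfl⟩
  classical
  have hex : ∃ i, v i ∉ S := ⟨k - 1, by rw [hvd]; exact hd⟩
  set j := Nat.find hex with hjdef
  have hjspec : v j ∉ S := Nat.find_spec hex
  have hjle : j ≤ k - 1 := Nat.find_le (by rw [hvd]; exact hd)
  have hj1 : 1 ≤ j := by
    rcases Nat.eq_zero_or_pos j with h0 | h
    · exfalso; apply hjspec; rw [h0, hv0]; exact hs
    · exact h
  have hmem : ∀ i < j, v i ∈ S := fun i hi => not_not.mp (Nat.find_min hex hi)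
  have hjk : j < k := by omega
  have hedge : (v (j - 1), v j) ∈ G.E := by
    have := hE (j - 1) (by omega)
    rwa [show j - 1 + 1 = j from by omega] at this
  have hnbr : v j ∈ G.nbr S := by
    simp only [GCS.nbr, Finset.mem_filter, Finset.mem_univ, true_and]
    exact ⟨hjspec, v (j - 1), hmem (j - 1) (by omega), hedge⟩
  -- suffix path bounds the heuristic
  have hsuffix : (h (v j) : EReal)
      ≤ ((pathCost (k - j) (fun i => x (j + i)) : ℝ) : EReal) := by
    refine le_trans (hadm.2 (v j)) (sInf_le ?_)
    refine ⟨k - j, fun i => v (j + i), fun i => x (j + i),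
      ⟨by omega, fun i hi => hE (j + i) (by omega), fun i hi => hX (j + i) (by omega)⟩,
      by simp, ?_, rfl⟩
    show v (j + (k - j - 1)) = d
    rw [show j + (k - j - 1) = k - 1 from by omega, hvd]
  have hsuffR : h (v j) ≤ pathCost (k - j) (fun i => x (j + i)) :=
    EReal.coe_le_coe_iff.mp hsuffix
  -- split the total cost
  have hsplit : pathCost k x
      = pathCost (j + 1) x + pathCost (k - j) (fun i => x (j + i)) := by
    unfold pathCost
    have hk1' : k - 1 = j + (k - j - 1) := by omega
    rw [hk1', Finset.sum_range_add]
    simp only [Nat.add_sub_cancel, ← Nat.add_assoc]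
  have hcost : h (v j) + pathCost (j + 1) x ≤ pathCost k x := by
    rw [hsplit]; linarith
  -- the prefix path is feasible for CstarOpt with terminal v j
  have hfeas : ∀ S' : Finset V, v j ∈ S' →
      G.CstarOpt h s S S' ≤ ((pathCost k x : ℝ) : EReal) := by
    intro S' hvS'
    have h1 : G.CstarOpt h s S S'
        ≤ ((pathCost (j + 1) x + h (v (j + 1 - 1)) : ℝ) : EReal) :=
      sInf_le ⟨j + 1, v, x,
        ⟨by omega, fun i hi => hE i (by omega), fun i hi => hX i (by omega)⟩,
        hv0, fun i hi => hmem i (by simpa using hi), by simpa using hvS', rfl⟩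
    refine h1.trans ?_
    exact_mod_cast (by simp only [Nat.add_sub_cancel]; linarith :
        pathCost (j + 1) x + h (v (j + 1 - 1)) ≤ pathCost k x)
  by_cases hcase : v j = d
  · refine le_trans (min_le_right _ _) (hfeas {d} ?_)
    simp [hcase]
  · refine le_trans (min_le_left _ _) (hfeas (G.nbr S \ {d}) ?_)
    simp [Finset.mem_sdiff, hnbr, hcase]
end

section
/- Let G=(V,E) be a graph of convex sets, let h: V → ℝ be any heuristic, let S be a cut-set and S' ⊆ N_S nonempty. Then the convex relaxation value is a lower bound on the exact combinatorial value: R*_opt(S,S') ≤ C*_opt(S,S'). In particular, every simple path (v_1=s,…,v_l) with v_i ∈ S for i<l, v_l ∈ S', together with points x_{v_i} ∈ X_{v_i}, yields a feasible point of the relaxation (taking y_{uv} the indicator of the path edges, α_v the indicator of v = v_l, z_{uv} = x_u y_{uv}, z'_{uv} = x_v y_{uv}) whose objective value equals the path cost plus h(v_l). -/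
open scoped BigOperators Pointwise Classical

/-! A path through the cut-set that visits some vertex twice can be shortened by cutting out
the closed walk between the two visits; by the triangle inequality this does not increase its
cost, and the new path still starts at `s`, stays in `S` and ends at the same vertex of `S'`.
So it suffices to treat simple paths. On a simple path the edges are pairwise distinct, so every
relaxation variable sees at most one path edge: the perspective constraints reduce to
`x_{v_i} ∈ X_{v_i}`, flow conservation at an inner vertex is a telescoping sum, and the objective
is the path cost plus the heuristic at the terminal vertex. -/

open Finset

theorem sum_dist_comp_le {α : Type*} [PseudoMetricSpace α] (f : ℕ → α) {τ : ℕ → ℕ}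
    (hτ : Monotone τ) (m : ℕ) :
    ∑ t ∈ range m, dist (f (τ t)) (f (τ (t + 1)))
      ≤ ∑ t ∈ Ico (τ 0) (τ m), dist (f t) (f (t + 1)) := by
  induction m with
  | zero => simp
  | succ m ih =>
    rw [sum_range_succ, ← sum_Ico_consecutive _ (hτ (Nat.zero_le m)) (hτ m.le_succ)]
    exact add_le_add ih (dist_le_Ico_sum_dist f (hτ m.le_succ))

theorem sum_range_succ_eq_sum_range {M : Type*} [AddCommMonoid M] (F : ℕ → M) {m : ℕ}
    (h0 : F 0 = 0) (hm : F m = 0) : ∑ i ∈ range m, F (i + 1) = ∑ i ∈ range m, F i := by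
  have := (sum_range_succ' F m).symm.trans (sum_range_succ F m)
  rwa [h0, hm, add_zero, add_zero] at this

theorem pair_succ_injective {α : Type*} {k : ℕ} {v : ℕ → α}
    (hinj : ∀ i j, i < k → j < k → v i = v j → i = j) :
    ∀ i j, i < k - 1 → j < k - 1 → (v i, v (i + 1)) = (v j, v (j + 1)) → i = j :=
  fun i j hi hj h => hinj i j (by omega) (by omega) (congrArg Prod.fst h)

section EdgeSum

variable {ι M : Type*} [DecidableEq ι] [AddCommMonoid M]

noncomputable def edgeSum (m : ℕ) (E : ℕ → ι) (f : ℕ → M) (e : ι) : M :=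
  ∑ i ∈ range m, if e = E i then f i else 0

theorem edgeSum_apply {m : ℕ} {E : ℕ → ι}
    (hE : ∀ i j, i < m → j < m → E i = E j → i = j) (f : ℕ → M) {i : ℕ} (hi : i < m) :
    edgeSum m E f (E i) = f i := by
  rw [edgeSum, sum_eq_single_of_mem i (mem_range.2 hi) fun j hj hji =>
    if_neg fun h => hji (hE j i (mem_range.1 hj) hi h.symm), if_pos rfl]

theorem edgeSum_eq_zero {m : ℕ} {E : ℕ → ι} {e : ι} (he : ¬∃ i < m, E i = e)
    (f : ℕ → M) : edgeSum m E f e = 0 :=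
  sum_eq_zero fun i hi => if_neg fun h => he ⟨i, mem_range.1 hi, h.symm⟩

theorem sum_edgeSum (T : Finset ι) (m : ℕ) (E : ℕ → ι) (f : ℕ → M) :
    ∑ e ∈ T, edgeSum m E f e = ∑ i ∈ range m, if E i ∈ T then f i else 0 := by
  unfold edgeSum
  rw [sum_comm]
  exact sum_congr rfl fun i _ => sum_ite_eq' T (E i) fun _ => f i

end EdgeSum

theorem zero_mem_persp {n : ℕ} {X : Set (EuclideanSpace ℝ (Fin n))} (hX : X.Nonempty) :
    ((0 : EuclideanSpace ℝ (Fin n)), (0 : ℝ)) ∈ persp X :=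
  ⟨le_rfl, by rw [Set.zero_smul_set hX]; exact Set.zero_mem_zero⟩

theorem mk_one_mem_persp {n : ℕ} {X : Set (EuclideanSpace ℝ (Fin n))}
    {p : EuclideanSpace ℝ (Fin n)} (hp : p ∈ X) : (p, (1 : ℝ)) ∈ persp X :=
  ⟨zero_le_one, by rwa [one_smul]⟩

def skipIndices (i j t : ℕ) : ℕ := if t < i then t else t + (j - i)

theorem strictMono_skipIndices (i j : ℕ) : StrictMono (skipIndices i j) := fun a b hab => by
  unfold skipIndices
  split_ifs <;> omega

theorem skipIndices_last {i j k : ℕ} (hij : i ≤ j) (hjk : j < k) :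
    skipIndices i j (k - (j - i) - 1) = k - 1 := by
  unfold skipIndices
  split_ifs <;> omega

theorem pathCost_comp_le {n : ℕ} (x : ℕ → EuclideanSpace ℝ (Fin n)) {τ : ℕ → ℕ}
    (hτ : Monotone τ) {k k' : ℕ} (hlast : τ (k' - 1) = k - 1) :
    pathCost k' (x ∘ τ) ≤ pathCost k x := by
  simp only [pathCost, Function.comp, ← dist_eq_norm]
  calc ∑ t ∈ range (k' - 1), dist (x (τ t)) (x (τ (t + 1)))
      ≤ ∑ t ∈ Ico (τ 0) (τ (k' - 1)), dist (x t) (x (t + 1)) := sum_dist_comp_le x hτ _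
    _ ≤ ∑ t ∈ range (k - 1), dist (x t) (x (t + 1)) := by
      rw [hlast, range_eq_Ico]
      exact sum_le_sum_of_subset_of_nonneg (Ico_subset_Ico_left (Nat.zero_le _))
        fun _ _ _ => dist_nonneg

namespace GCS

variable {V : Type*} {n : ℕ} {G : GCS V n}

theorem IsPathOn.comp {k k' : ℕ} {v : ℕ → V} {x : ℕ → EuclideanSpace ℝ (Fin n)}
    (hp : G.IsPathOn k v x) {τ : ℕ → ℕ} (hτ : StrictMono τ) (hk' : 1 ≤ k')
    (hlast : τ (k' - 1) < k) (hstep : ∀ t, t + 1 < k' → v (τ (t + 1)) = v (τ t + 1)) :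
    G.IsPathOn k' (v ∘ τ) (x ∘ τ) := by
  obtain ⟨-, hE, hX⟩ := hp
  refine ⟨hk', fun t ht => ?_, fun t ht => hX _ ?_⟩
  · have hlt : τ t < τ (t + 1) := hτ (Nat.lt_succ_self t)
    have hle : τ (t + 1) ≤ τ (k' - 1) := hτ.monotone (by omega)
    simp only [Function.comp, hstep t ht]
    exact hE _ (by omega)
  · exact (hτ.monotone (by omega : t ≤ k' - 1)).trans_lt hlast

/-- The paths over which `CstarOpt` takes its infimum. -/
structure IsCutPath (G : GCS V n) (s : V) (S S' : Finset V) (k : ℕ) (v : ℕ → V)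
    (x : ℕ → EuclideanSpace ℝ (Fin n)) : Prop where
  isPathOn : G.IsPathOn k v x
  start : v 0 = s
  mem_cut : ∀ i, i < k - 1 → v i ∈ S
  last_mem : v (k - 1) ∈ S'

theorem disjoint_nbr [Fintype V] (G : GCS V n) (S : Finset V) : Disjoint S (G.nbr S) :=
  disjoint_right.2 fun _ hv => (mem_filter.1 hv).2.1

namespace IsCutPath

variable {s : V} {S S' : Finset V} {k : ℕ} {v : ℕ → V}
  {x : ℕ → EuclideanSpace ℝ (Fin n)}

theorem comp (hP : G.IsCutPath s S S' k v x) {τ : ℕ → ℕ} (hτ : StrictMono τ) {k' : ℕ}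
    (hk' : 1 ≤ k') (hlast : τ (k' - 1) = k - 1) (h0 : v (τ 0) = v 0)
    (hstep : ∀ t, t + 1 < k' → v (τ (t + 1)) = v (τ t + 1)) :
    G.IsCutPath s S S' k' (v ∘ τ) (x ∘ τ) where
  isPathOn := hP.isPathOn.comp hτ hk' (by have := hP.isPathOn.1; omega) hstep
  start := h0.trans hP.start
  mem_cut t ht := hP.mem_cut _ (hlast ▸ hτ ht)
  last_mem := by simpa only [Function.comp, hlast] using hP.last_mem

theorem skip_loop (hP : G.IsCutPath s S S' k v x) {i j : ℕ} (hij : i < j) (hjk : j < k)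
    (hv : v i = v j) :
    G.IsCutPath s S S' (k - (j - i)) (v ∘ skipIndices i j) (x ∘ skipIndices i j) := by
  refine hP.comp (strictMono_skipIndices i j) (by omega) (skipIndices_last hij.le hjk) ?_
    fun t ht => ?_ <;> unfold skipIndices
  · split_ifs with hi
    · rfl
    · rw [show (0 : ℕ) + (j - i) = j by omega, ← hv, show i = 0 by omega]
  · split_ifs with h1 h2 h2
    · rfl
    · omega
    · rw [show t + 1 = i by omega, show i + (j - i) = j by omega, hv]
    · congr 1
      omega

theorem exists_injective (hP : G.IsCutPath s S S' k v x) :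
    ∃ k' v' x', G.IsCutPath s S S' k' v' x' ∧
      (∀ i j, i < k' → j < k' → v' i = v' j → i = j) ∧
      v' (k' - 1) = v (k - 1) ∧ pathCost k' x' ≤ pathCost k x := by
  induction k using Nat.strong_induction_on generalizing v x with
  | _ k ih =>
  by_cases hinj : ∀ i j, i < k → j < k → v i = v j → i = j
  · exact ⟨k, v, x, hP, hinj, rfl, le_rfl⟩
  push Not at hinj
  obtain ⟨i, j, hi, hj, hv, hne⟩ := hinj
  wlog hij : i < j generalizing i j
  · exact this j i hj hi hv.symm hne.symm (by omega)
  obtain ⟨k', v', x', hP', hinj', hlast', hcost'⟩ := ih _ (by omega) (hP.skip_loop hij hj hv)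
  have hlast := skipIndices_last hij.le hj
  refine ⟨k', v', x', hP', hinj', by rw [hlast', Function.comp, hlast], ?_⟩
  exact hcost'.trans (pathCost_comp_le x (strictMono_skipIndices i j).monotone hlast)

theorem two_le (hP : G.IsCutPath s S S' k v x) (hs : s ∈ S) (hdisj : Disjoint S S') :
    2 ≤ k := by
  by_contra hk
  have hlast := hP.last_mem
  rw [show k - 1 = 0 by have := hP.isPathOn.1; omega, hP.start] at hlast
  exact disjoint_left.1 hdisj hs hlast

theorem edge_mem_Ebar (hP : G.IsCutPath s S S' k v x) {i : ℕ} (hi : i < k - 1) :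
    (v i, v (i + 1)) ∈ G.Ebar S S' := by
  refine mem_filter.2 ⟨hP.isPathOn.2.1 i (by omega), hP.mem_cut i hi, ?_⟩
  rcases Nat.lt_or_ge (i + 1) (k - 1) with h | h
  · exact mem_union_left _ (hP.mem_cut _ h)
  · exact mem_union_right _ (by rw [show i + 1 = k - 1 by omega]; exact hP.last_mem)

theorem sum_filter_Ebar {M : Type*} [AddCommMonoid M] (hP : G.IsCutPath s S S' k v x)
    (p : V × V → Prop) (f : ℕ → M) :
    ∑ e ∈ (G.Ebar S S').filter p, edgeSum (k - 1) (fun i => (v i, v (i + 1))) f e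
      = ∑ i ∈ range (k - 1), if p (v i, v (i + 1)) then f i else 0 := by
  rw [sum_edgeSum]
  refine sum_congr rfl fun i hi => ?_
  simp only [mem_filter, hP.edge_mem_Ebar (mem_range.1 hi), true_and]

theorem relaxFeasible (hP : G.IsCutPath s S S' k v x) (hs : s ∈ S) (hdisj : Disjoint S S')
    (hinj : ∀ i j, i < k → j < k → v i = v j → i = j) :
    G.RelaxFeasible s S S' (edgeSum (k - 1) (fun i => (v i, v (i + 1))) fun _ => (1 : ℝ))
      (fun w => if w = v (k - 1) then 1 else 0)
      (edgeSum (k - 1) (fun i => (v i, v (i + 1))) x)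
      (edgeSum (k - 1) (fun i => (v i, v (i + 1))) fun i => x (i + 1)) := by
  have hk := hP.two_le hs hdisj
  have hE := pair_succ_injective hinj
  refine ⟨fun e _ => ?_, fun w _ => ?_, ?_, ?_, fun w hw => ?_, fun w hwS hws => ?_,
    fun e _ => ?_⟩
  · by_cases he : ∃ i < k - 1, (v i, v (i + 1)) = e
    · obtain ⟨i, hi, rfl⟩ := he
      rw [edgeSum_apply hE _ hi]
      exact ⟨zero_le_one, le_rfl⟩
    · rw [edgeSum_eq_zero he]
      exact ⟨le_rfl, zero_le_one⟩
  · dsimp only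
    split_ifs <;> norm_num
  · rw [sum_ite_eq' S' (v (k - 1)) fun _ => (1 : ℝ), if_pos hP.last_mem]
  · have hsrc : ∀ i < k - 1, v i = s → i = 0 := fun i hi h =>
      hinj i 0 (by omega) (by omega) (h.trans hP.start.symm)
    rw [hP.sum_filter_Ebar, sum_eq_single_of_mem 0 (mem_range.2 (by omega))
      fun i hi hi0 => if_neg fun h => hi0 (hsrc i (mem_range.1 hi) h), if_pos hP.start]
  · have hinner : ∀ i < k - 2, v (i + 1) ≠ w := fun i hi h =>
      disjoint_left.1 hdisj (h ▸ hP.mem_cut (i + 1) (by omega)) hw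
    rw [hP.sum_filter_Ebar, sum_eq_single_of_mem (k - 2) (mem_range.2 (by omega))
      fun i hi hik => if_neg (hinner i (by have := mem_range.1 hi; omega))]
    simp only [show k - 2 + 1 = k - 1 by omega, eq_comm]
  · have h0 : v 0 ≠ w := fun h => hws (h.symm.trans hP.start)
    have hlast : v (k - 1) ≠ w := fun h => disjoint_left.1 hdisj hwS (h ▸ hP.last_mem)
    simp only [hP.sum_filter_Ebar]
    exact ⟨sum_range_succ_eq_sum_range (fun t => if v t = w then x t else 0)
        (if_neg h0) (if_neg hlast),
      sum_range_succ_eq_sum_range (fun t => if v t = w then (1 : ℝ) else 0)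
        (if_neg h0) (if_neg hlast)⟩
  · by_cases he : ∃ i < k - 1, (v i, v (i + 1)) = e
    · obtain ⟨i, hi, rfl⟩ := he
      simp only [edgeSum_apply hE _ hi]
      exact ⟨mk_one_mem_persp (hP.isPathOn.2.2 i (by omega)),
        mk_one_mem_persp (hP.isPathOn.2.2 (i + 1) (by omega))⟩
    · simp only [edgeSum_eq_zero he]
      exact ⟨zero_mem_persp (G.nonempty _), zero_mem_persp (G.nonempty _)⟩

theorem relaxObj_eq (hP : G.IsCutPath s S S' k v x)
    (hinj : ∀ i j, i < k → j < k → v i = v j → i = j) (h : V → ℝ) :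
    G.relaxObj h S S' (edgeSum (k - 1) (fun i => (v i, v (i + 1))) fun _ => (1 : ℝ))
      (fun w => if w = v (k - 1) then 1 else 0)
      (edgeSum (k - 1) (fun i => (v i, v (i + 1))) x)
      (edgeSum (k - 1) (fun i => (v i, v (i + 1))) fun i => x (i + 1))
      = pathCost k x + h (v (k - 1)) := by
  have hE := pair_succ_injective hinj
  have hnorm : ∀ e, ‖edgeSum (k - 1) (fun i => (v i, v (i + 1))) x e
      - edgeSum (k - 1) (fun i => (v i, v (i + 1))) (fun i => x (i + 1)) e‖
      = edgeSum (k - 1) (fun i => (v i, v (i + 1))) (fun i => ‖x i - x (i + 1)‖) e := by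
    intro e
    by_cases he : ∃ i < k - 1, (v i, v (i + 1)) = e
    · obtain ⟨i, hi, rfl⟩ := he
      simp only [edgeSum_apply hE _ hi]
    · simp only [edgeSum_eq_zero he, sub_zero, norm_zero]
  have hcost : ∑ e ∈ G.Ebar S S', edgeSum (k - 1) (fun i => (v i, v (i + 1)))
      (fun i => ‖x i - x (i + 1)‖) e = pathCost k x := by
    rw [sum_edgeSum]
    exact sum_congr rfl fun i hi => if_pos (hP.edge_mem_Ebar (mem_range.1 hi))
  simp only [relaxObj, hnorm, hcost, ite_mul, one_mul, zero_mul]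
  rw [sum_ite_eq' S' (v (k - 1)) h, if_pos hP.last_mem]

end IsCutPath

theorem RstarOpt_le_CstarOpt (G : GCS V n) (h : V → ℝ) {s : V} {S S' : Finset V} (hs : s ∈ S)
    (hdisj : Disjoint S S') : G.RstarOpt h s S S' ≤ G.CstarOpt h s S S' := by
  refine le_sInf ?_
  rintro c ⟨k, v, x, hp, h0, hS, hT, rfl⟩
  obtain ⟨k', v', x', hP, hinj, hlast, hcost⟩ :=
    (⟨hp, h0, hS, hT⟩ : G.IsCutPath s S S' k v x).exists_injective
  refine sInf_le_of_le ⟨_, _, _, _, hP.relaxFeasible hs hdisj hinj, rfl⟩ ?_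
  rw [hP.relaxObj_eq hinj h, hlast]
  exact EReal.coe_le_coe_iff.2 (by gcongr)

end GCS

theorem stmt4_general {V : Type*} [Fintype V] {n : ℕ} (G : GCS V n) (h : V → ℝ) (s : V)
    (S S' : Finset V) (hs : s ∈ S) (hsub : S' ⊆ G.nbr S) :
    G.RstarOpt h s S S' ≤ G.CstarOpt h s S S' ∧
    ∀ (k : ℕ) (v : ℕ → V) (x : ℕ → EuclideanSpace ℝ (Fin n)),
      G.IsPathOn k v x →
      (∀ i j, i < k → j < k → v i = v j → i = j) →
      v 0 = s → (∀ i, i < k - 1 → v i ∈ S) → v (k - 1) ∈ S' →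
      (G.RelaxFeasible s S S'
          (fun e => ∑ i ∈ Finset.range (k - 1), if e = (v i, v (i + 1)) then (1 : ℝ) else 0)
          (fun w => if w = v (k - 1) then 1 else 0)
          (fun e => ∑ i ∈ Finset.range (k - 1), if e = (v i, v (i + 1)) then x i else 0)
          (fun e => ∑ i ∈ Finset.range (k - 1), if e = (v i, v (i + 1)) then x (i + 1) else 0) ∧
        G.relaxObj h S S'
          (fun e => ∑ i ∈ Finset.range (k - 1), if e = (v i, v (i + 1)) then (1 : ℝ) else 0)
          (fun w => if w = v (k - 1) then 1 else 0)
          (fun e => ∑ i ∈ Finset.range (k - 1), if e = (v i, v (i + 1)) then x i else 0)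
          (fun e => ∑ i ∈ Finset.range (k - 1), if e = (v i, v (i + 1)) then x (i + 1) else 0)
          = pathCost k x + h (v (k - 1))) := by
  have hdisj : Disjoint S S' := (G.disjoint_nbr S).mono_right hsub
  refine ⟨G.RstarOpt_le_CstarOpt h hs hdisj, fun k v x hp hinj h0 hS hT => ?_⟩
  have hP : G.IsCutPath s S S' k v x := ⟨hp, h0, hS, hT⟩
  exact ⟨hP.relaxFeasible hs hdisj hinj, hP.relaxObj_eq hinj h⟩

/-- The convex relaxation lower-bounds the exact combinatorial value:
`R*_opt(S,S') ≤ C*_opt(S,S')`.  In particular, every simple path from `s` through `S`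
ending in `S'`, with chosen points, yields a feasible point of the relaxation (with `y`
the indicator of the path edges, `α` the indicator of the terminal vertex,
`z_{uv} = x_u y_{uv}`, `z'_{uv} = x_v y_{uv}`) whose objective value equals the path cost
plus the heuristic value at the terminal vertex. -/
theorem stmt4 {V : Type*} [Fintype V] {n : ℕ} (G : GCS V n) (h : V → ℝ) (s d : V)
    (S S' : Finset V) (hs : s ∈ S) (hd : d ∉ S) (hsub : S' ⊆ G.nbr S)
    (hne : S'.Nonempty) :
    G.RstarOpt h s S S' ≤ G.CstarOpt h s S S' ∧
    ∀ (k : ℕ) (v : ℕ → V) (x : ℕ → EuclideanSpace ℝ (Fin n)),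
      G.IsPathOn k v x →
      (∀ i j, i < k → j < k → v i = v j → i = j) →
      v 0 = s → (∀ i, i < k - 1 → v i ∈ S) → v (k - 1) ∈ S' →
      (G.RelaxFeasible s S S'
          (fun e => ∑ i ∈ Finset.range (k - 1), if e = (v i, v (i + 1)) then (1 : ℝ) else 0)
          (fun w => if w = v (k - 1) then 1 else 0)
          (fun e => ∑ i ∈ Finset.range (k - 1), if e = (v i, v (i + 1)) then x i else 0)
          (fun e => ∑ i ∈ Finset.range (k - 1), if e = (v i, v (i + 1)) then x (i + 1) else 0) ∧
        G.relaxObj h S S'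
          (fun e => ∑ i ∈ Finset.range (k - 1), if e = (v i, v (i + 1)) then (1 : ℝ) else 0)
          (fun w => if w = v (k - 1) then 1 else 0)
          (fun e => ∑ i ∈ Finset.range (k - 1), if e = (v i, v (i + 1)) then x i else 0)
          (fun e => ∑ i ∈ Finset.range (k - 1), if e = (v i, v (i + 1)) then x (i + 1) else 0)
          = pathCost k x + h (v (k - 1))) :=
  stmt4_general G h s S S' hs hsub
end

section
/- (Theorem 1) Let G=(V,E) be a graph of convex sets with origin s and destination d, suppose there exists at least one path from s to d, let h be an admissible heuristic, and let S be any cut-set (so N_S ≠ ∅). Then C_opt(s,d) ≥ R*_opt(S, N_S). -/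
open scoped BigOperators Pointwise Classical

/-!
Cut a path from `s` to `d` at its first vertex outside `S`: that vertex lies in `N_S`, and
admissibility bounds `h` there by the cost of the remaining suffix. Cutting out cycles of the
prefix does not increase its cost (triangle inequality), and a prefix without repeated vertices
yields a binary feasible point of the relaxation — `y` the indicator of its edges, `z` and `z'` the
chosen points at the two ends of each traversed edge, `α` the indicator of the exit vertex — whose
objective is at most the prefix cost plus `h` at the exit vertex.
-/

open Finset

theorem dist_comp_le_sum_Ico_dist {α : Type*} [PseudoMetricSpace α] (x : ℕ → α) {g : ℕ → ℕ}
    (hg : Monotone g) (m : ℕ) :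
    ∑ t ∈ range m, dist (x (g t)) (x (g (t + 1)))
      ≤ ∑ t ∈ Ico (g 0) (g m), dist (x t) (x (t + 1)) := by
  induction m with
  | zero => simp
  | succ m ih =>
    rw [sum_range_succ, ← sum_Ico_consecutive _ (hg m.zero_le) (hg m.le_succ)]
    exact add_le_add ih (dist_le_Ico_sum_dist x (hg m.le_succ))

theorem sum_range_shift_of_eq_zero {M : Type*} [AddCommMonoid M] (g : ℕ → M) {j : ℕ}
    (h0 : g 0 = 0) (hj : g j = 0) : ∑ i ∈ range j, g (i + 1) = ∑ i ∈ range j, g i := by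
  simpa [h0, hj] using (sum_range_succ' g j).symm.trans (sum_range_succ g j)

theorem sum_mem_persp_of_card_le_one {n : ℕ} {X : Set (EuclideanSpace ℝ (Fin n))}
    (hX : X.Nonempty) {F : Finset ℕ} (hF : #F ≤ 1) {x : ℕ → EuclideanSpace ℝ (Fin n)}
    (hx : ∀ i ∈ F, x i ∈ X) :
    (∑ i ∈ F, x i, ∑ _i ∈ F, (1 : ℝ)) ∈ persp X := by
  rcases F.eq_empty_or_nonempty with rfl | hne
  · simp [persp, Set.zero_smul_set hX]
  · obtain ⟨i, rfl⟩ := card_eq_one.mp (le_antisymm hF hne.card_pos)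
    simpa [persp] using hx i (mem_singleton_self i)

theorem pathCost_eq_add {n : ℕ} (x : ℕ → EuclideanSpace ℝ (Fin n)) {j k : ℕ}
    (hjk : j < k) :
    pathCost k x = ∑ i ∈ range j, ‖x i - x (i + 1)‖ + pathCost (k - j) fun i => x (j + i) := by
  rw [pathCost, pathCost, show k - 1 = j + (k - j - 1) by omega, sum_range_add]
  simp only [add_assoc]

namespace GCS

variable {V : Type*} {n : ℕ}

noncomputable def edgeSum {M : Type*} [AddCommMonoid M] (v : ℕ → V) (j : ℕ) (f : ℕ → M)
    (e : V × V) : M :=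
  ∑ i ∈ range j with (v i, v (i + 1)) = e, f i

theorem sum_edgeSum {M : Type*} [AddCommMonoid M] (v : ℕ → V) (j : ℕ) (f : ℕ → M)
    (T : Finset (V × V)) :
    ∑ e ∈ T, edgeSum v j f e = ∑ i ∈ range j with (v i, v (i + 1)) ∈ T, f i :=
  sum_fiberwise_eq_sum_filter _ _ _ _

theorem sum_edgeSum_filter {M : Type*} [AddCommMonoid M] {v : ℕ → V} {j : ℕ} (f : ℕ → M)
    {T : Finset (V × V)} (hT : ∀ i < j, (v i, v (i + 1)) ∈ T) (P : V × V → Prop) :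
    ∑ e ∈ T with P e, edgeSum v j f e
      = ∑ i ∈ range j, if P (v i, v (i + 1)) then f i else 0 := by
  rw [sum_edgeSum, ← sum_filter]
  exact sum_congr (filter_congr fun i hi => by simp [hT i (mem_range.mp hi)]) fun _ _ => rfl

theorem card_filter_edge_eq_le_one {v : ℕ → V} {j : ℕ} (hinj : Set.InjOn v (Set.Iio j))
    (e : V × V) :
    #{i ∈ range j | (v i, v (i + 1)) = e} ≤ 1 := by
  refine card_le_one.mpr fun a ha b hb => hinj ?_ ?_ ?_
  all_goals simp only [mem_filter, mem_range] at ha hb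
  · exact ha.1
  · exact hb.1
  · exact congrArg Prod.fst (ha.2.trans hb.2.symm)

structure IsExitWalk (G : GCS V n) (s : V) (S : Finset V) (j : ℕ) (v : ℕ → V)
    (x : ℕ → EuclideanSpace ℝ (Fin n)) : Prop where
  start : v 0 = s
  edge_mem : ∀ i < j, (v i, v (i + 1)) ∈ G.E
  mem_cut : ∀ i < j, v i ∈ S
  point_mem : ∀ i ≤ j, x i ∈ G.X (v i)
  exit : v j ∉ S

namespace IsExitWalk

variable {G : GCS V n} {s : V} {S : Finset V} {j : ℕ} {v : ℕ → V}
  {x : ℕ → EuclideanSpace ℝ (Fin n)}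

theorem pos (hw : G.IsExitWalk s S j v x) (hs : s ∈ S) : 0 < j :=
  Nat.pos_of_ne_zero fun hj => hw.exit (hj ▸ hw.start ▸ hs)

theorem exit_mem_nbr [Fintype V] (hw : G.IsExitWalk s S j v x) (hs : s ∈ S) :
    v j ∈ G.nbr S := by
  have hj := hw.pos hs
  refine mem_filter.mpr ⟨mem_univ _, hw.exit, v (j - 1), hw.mem_cut _ (by omega), ?_⟩
  simpa [Nat.sub_add_cancel hj] using hw.edge_mem (j - 1) (by omega)

theorem edge_mem_Ebar [Fintype V] (hw : G.IsExitWalk s S j v x) (hs : s ∈ S) {i : ℕ}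
    (hi : i < j) : (v i, v (i + 1)) ∈ G.Ebar S (G.nbr S) := by
  refine mem_filter.mpr ⟨hw.edge_mem i hi, hw.mem_cut i hi, ?_⟩
  rcases (Nat.succ_le_of_lt hi).eq_or_lt with hij | hij
  · exact mem_union_right _ (by rw [show i + 1 = j from hij]; exact hw.exit_mem_nbr hs)
  · exact mem_union_left _ (hw.mem_cut _ hij)

-- Cut out the closed sub-walk between the visits at `a` and `b`.
theorem shortcut (hw : G.IsExitWalk s S j v x) {a b : ℕ} (hab : a < b) (hbj : b < j)
    (hv : v a = v b) :
    ∃ j' < j, ∃ (v' : ℕ → V) (x' : ℕ → EuclideanSpace ℝ (Fin n)),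
      G.IsExitWalk s S j' v' x' ∧ v' j' = v j ∧
      ∑ i ∈ range j', ‖x' i - x' (i + 1)‖ ≤ ∑ i ∈ range j, ‖x i - x (i + 1)‖ := by
  set g : ℕ → ℕ := fun t => if t ≤ a then t else t + (b - a) with hg
  have hg_mono : Monotone g := fun t u htu => by simp only [hg]; split_ifs <;> omega
  have hg_lt : ∀ t < j - (b - a), g t < j := fun t ht => by simp only [hg]; split_ifs <;> omega
  have hg_end : g (j - (b - a)) = j := by simp only [hg]; rw [if_neg (by omega)]; omega
  refine ⟨j - (b - a), by omega, v ∘ g, x ∘ g, ⟨?_, ?_, ?_, ?_, ?_⟩, by simp [hg_end], ?_⟩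
  · simpa [hg] using hw.start
  · intro t ht
    rcases lt_trichotomy t a with hta | rfl | hta
    · simpa [hg, hta.le, Nat.succ_le_of_lt hta] using hw.edge_mem t (by omega)
    · have := hw.edge_mem b hbj
      simp only [hg, Function.comp, le_refl, if_true, hv]
      rwa [if_neg (by omega), show t + 1 + (b - t) = b + 1 by omega]
    · have := hw.edge_mem (t + (b - a)) (by omega)
      simp only [hg, Function.comp, if_neg (show ¬ t ≤ a by omega),
        if_neg (show ¬ t + 1 ≤ a by omega)]
      rwa [show t + 1 + (b - a) = t + (b - a) + 1 by omega]
  · exact fun t ht => hw.mem_cut _ (hg_lt t ht)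
  · intro t ht
    exact hw.point_mem _ ((hg_mono ht).trans hg_end.le)
  · simpa [hg_end] using hw.exit
  · simp only [Function.comp, ← dist_eq_norm]
    calc ∑ t ∈ range (j - (b - a)), dist (x (g t)) (x (g (t + 1)))
        ≤ ∑ t ∈ Ico (g 0) (g (j - (b - a))), dist (x t) (x (t + 1)) :=
          dist_comp_le_sum_Ico_dist x hg_mono _
      _ = ∑ t ∈ range j, dist (x t) (x (t + 1)) := by
          rw [hg_end, show g 0 = 0 by simp [hg], range_eq_Ico]

theorem exists_injOn (hw : G.IsExitWalk s S j v x) :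
    ∃ j' ≤ j, ∃ (v' : ℕ → V) (x' : ℕ → EuclideanSpace ℝ (Fin n)),
      G.IsExitWalk s S j' v' x' ∧ Set.InjOn v' (Set.Iio j') ∧ v' j' = v j ∧
      ∑ i ∈ range j', ‖x' i - x' (i + 1)‖ ≤ ∑ i ∈ range j, ‖x i - x (i + 1)‖ := by
  induction j using Nat.strong_induction_on generalizing v x with
  | _ j ih =>
  by_cases hinj : Set.InjOn v (Set.Iio j)
  · exact ⟨j, le_rfl, v, x, hw, hinj, rfl, le_rfl⟩
  obtain ⟨a, b, hab, hbj, hv⟩ : ∃ a b, a < b ∧ b < j ∧ v a = v b := by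
    simp only [Set.InjOn, Set.mem_Iio, not_forall] at hinj
    obtain ⟨a, ha, b, hb, hv, hne⟩ := hinj
    rcases Nat.lt_or_gt_of_ne hne with hab | hba
    exacts [⟨a, b, hab, hb, hv⟩, ⟨b, a, hba, ha, hv.symm⟩]
  obtain ⟨j₁, hj₁, v₁, x₁, hw₁, hend₁, hcost₁⟩ := hw.shortcut hab hbj hv
  obtain ⟨j₂, hj₂, v₂, x₂, hw₂, hinj₂, hend₂, hcost₂⟩ := ih j₁ hj₁ hw₁
  exact ⟨j₂, by omega, v₂, x₂, hw₂, hinj₂, hend₂.trans hend₁, hcost₂.trans hcost₁⟩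

theorem flow_conservation {M : Type*} [AddCommMonoid M] (hw : G.IsExitWalk s S j v x)
    (f : ℕ → M) {w : V} (hwS : w ∈ S) (hws : w ≠ s) :
    (∑ i ∈ range j, if v (i + 1) = w then f (i + 1) else 0)
      = ∑ i ∈ range j, if v i = w then f i else 0 :=
  sum_range_shift_of_eq_zero (fun i => if v i = w then f i else 0)
    (if_neg (hw.start ▸ hws.symm)) (if_neg fun h : v j = w => hw.exit (h ▸ hwS))

theorem relaxFeasible [Fintype V] (hw : G.IsExitWalk s S j v x) (hs : s ∈ S)
    (hinj : Set.InjOn v (Set.Iio j)) :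
    G.RelaxFeasible s S (G.nbr S) (edgeSum v j fun _ => 1) (fun w => if w = v j then 1 else 0)
      (edgeSum v j x) (edgeSum v j fun i => x (i + 1)) := by
  have hj := hw.pos hs
  have hT : ∀ i < j, (v i, v (i + 1)) ∈ G.Ebar S (G.nbr S) := fun _ => hw.edge_mem_Ebar hs
  have hpersp : ∀ e, (edgeSum v j x e, edgeSum v j (fun _ => (1 : ℝ)) e) ∈ persp (G.X e.1) ∧
      (edgeSum v j (fun i => x (i + 1)) e, edgeSum v j (fun _ => (1 : ℝ)) e)
        ∈ persp (G.X e.2) := by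
    intro e
    constructor <;>
      refine sum_mem_persp_of_card_le_one (G.nonempty _) (card_filter_edge_eq_le_one hinj e) ?_ <;>
      intro i hi <;> obtain ⟨hij, rfl⟩ := mem_filter.mp hi
    · exact hw.point_mem i (mem_range.mp hij).le
    · exact hw.point_mem (i + 1) (mem_range.mp hij)
  refine ⟨fun e _ => ?_, fun w _ => ?_, ?_, ?_, fun w hw' => ?_, fun w hwS hws => ?_,
    fun e _ => hpersp e⟩
  · have hcard := card_filter_edge_eq_le_one hinj e
    simp only [edgeSum, sum_const, nsmul_eq_mul, mul_one]
    exact ⟨by positivity, by exact_mod_cast hcard⟩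
  · dsimp only
    split_ifs <;> simp
  · simp [hw.exit_mem_nbr hs]
  · rw [sum_edgeSum_filter _ hT]
    refine (sum_eq_single_of_mem 0 (mem_range.mpr hj) fun i hi hi0 => if_neg ?_).trans
      (if_pos hw.start)
    exact fun his => hi0 (hinj (mem_range.mp hi) hj (his.trans hw.start.symm))
  · rw [sum_edgeSum_filter _ hT]
    refine (sum_eq_single_of_mem (j - 1) (mem_range.mpr (by omega))
      fun i hi hij => if_neg ?_).trans ?_
    · exact fun hiw => (mem_filter.mp hw').2.1 (hiw ▸ hw.mem_cut _ (by simp at hi; omega))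
    · simp [Nat.sub_add_cancel hj, eq_comm]
  · simp only [sum_edgeSum_filter _ hT]
    exact ⟨hw.flow_conservation x hwS hws, hw.flow_conservation (fun _ => (1 : ℝ)) hwS hws⟩

theorem relaxObj_le [Fintype V] (hw : G.IsExitWalk s S j v x) (hs : s ∈ S) (h : V → ℝ) :
    G.relaxObj h S (G.nbr S) (edgeSum v j fun _ => 1) (fun w => if w = v j then 1 else 0)
      (edgeSum v j x) (edgeSum v j fun i => x (i + 1))
      ≤ ∑ i ∈ range j, ‖x i - x (i + 1)‖ + h (v j) := by
  have hedge : ∀ e, ‖edgeSum v j x e - edgeSum v j (fun i => x (i + 1)) e‖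
      ≤ edgeSum v j (fun i => ‖x i - x (i + 1)‖) e := fun e => by
    simpa only [edgeSum, ← sum_sub_distrib] using norm_sum_le _ _
  unfold relaxObj
  gcongr ?_ + ?_
  · calc ∑ e ∈ G.Ebar S (G.nbr S), ‖edgeSum v j x e - edgeSum v j (fun i => x (i + 1)) e‖
        ≤ ∑ e ∈ G.Ebar S (G.nbr S), edgeSum v j (fun i => ‖x i - x (i + 1)‖) e :=
          sum_le_sum fun e _ => hedge e
      _ ≤ ∑ i ∈ range j, ‖x i - x (i + 1)‖ := by
          rw [sum_edgeSum]
          exact sum_le_sum_of_subset_of_nonneg (filter_subset _ _) fun _ _ _ => norm_nonneg _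
  · simp [hw.exit_mem_nbr hs]

theorem RstarOpt_le [Fintype V] (hw : G.IsExitWalk s S j v x) (hs : s ∈ S) (h : V → ℝ) :
    G.RstarOpt h s S (G.nbr S) ≤ ((∑ i ∈ range j, ‖x i - x (i + 1)‖ + h (v j) : ℝ) : EReal) := by
  obtain ⟨j', -, v', x', hw', hinj, hend, hcost⟩ := hw.exists_injOn
  have hrelax :
      G.RstarOpt h s S (G.nbr S) ≤ ((G.relaxObj h S (G.nbr S) _ _ _ _ : ℝ) : EReal) :=
    sInf_le ⟨_, _, _, _, hw'.relaxFeasible hs hinj, rfl⟩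
  refine hrelax.trans (EReal.coe_le_coe ?_)
  linarith [hw'.relaxObj_le hs h, congrArg h hend]

end IsExitWalk

theorem IsPathOn.exists_isExitWalk {G : GCS V n} {k : ℕ} {v : ℕ → V}
    {x : ℕ → EuclideanSpace ℝ (Fin n)} (hp : G.IsPathOn k v x) {s d : V} {S : Finset V}
    (hv0 : v 0 = s) (hvd : v (k - 1) = d) (hd : d ∉ S) :
    ∃ j < k, G.IsExitWalk s S j v x := by
  have hex : ∃ j, v j ∉ S := ⟨k - 1, hvd ▸ hd⟩
  have hjk : Nat.find hex ≤ k - 1 := Nat.find_min' hex (hvd ▸ hd)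
  obtain ⟨hk, hE, hX⟩ := hp
  exact ⟨Nat.find hex, by omega, hv0, fun i hi => hE i (by omega),
    fun i hi => not_not.mp (Nat.find_min hex hi), fun i hi => hX i (by omega),
    Nat.find_spec hex⟩

theorem IsPathOn.Copt_le_pathCost_drop {G : GCS V n} {k : ℕ} {v : ℕ → V}
    {x : ℕ → EuclideanSpace ℝ (Fin n)} (hp : G.IsPathOn k v x) {j : ℕ} (hjk : j < k) :
    G.Copt (v j) (v (k - 1)) ≤ ((pathCost (k - j) fun i => x (j + i) : ℝ) : EReal) := by
  obtain ⟨-, hE, hX⟩ := hp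
  refine sInf_le ⟨k - j, fun i => v (j + i), fun i => x (j + i),
    ⟨by omega, fun i hi => hE (j + i) (by omega), fun i hi => hX (j + i) (by omega)⟩,
    rfl, by simp only; congr 1; omega, rfl⟩

end GCS

/-- Theorem 1: For any cut-set `S` (whose neighborhood is then nonempty),
`C_opt(s,d) ≥ R*_opt(S, N_S)`. -/
theorem stmt5 {V : Type*} [Fintype V] {n : ℕ} (G : GCS V n) (s d : V) (h : V → ℝ)
    (hadm : G.Admissible d h)
    (hpath : ∃ (k : ℕ) (v : ℕ → V) (x : ℕ → EuclideanSpace ℝ (Fin n)),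
      G.IsPathOn k v x ∧ v 0 = s ∧ v (k - 1) = d)
    (S : Finset V) (hs : s ∈ S) (hd : d ∉ S) :
    (G.nbr S).Nonempty ∧ G.RstarOpt h s S (G.nbr S) ≤ G.Copt s d := by
  obtain ⟨k₀, v₀, x₀, hp₀, hv₀0, hv₀d⟩ := hpath
  obtain ⟨j₀, -, hw₀⟩ := hp₀.exists_isExitWalk (S := S) hv₀0 hv₀d hd
  refine ⟨⟨v₀ j₀, hw₀.exit_mem_nbr hs⟩, le_sInf ?_⟩
  rintro _ ⟨k, v, x, hp, hv0, hvd, rfl⟩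
  obtain ⟨j, hjk, hw⟩ := hp.exists_isExitWalk (S := S) hv0 hvd hd
  have hsuffix : h (v j) ≤ pathCost (k - j) fun i => x (j + i) :=
    EReal.coe_le_coe_iff.mp ((hadm.2 (v j)).trans (hvd ▸ hp.Copt_le_pathCost_drop hjk))
  calc G.RstarOpt h s S (G.nbr S)
      ≤ ((∑ i ∈ range j, ‖x i - x (i + 1)‖ + h (v j) : ℝ) : EReal) := hw.RstarOpt_le hs h
    _ ≤ ((pathCost k x : ℝ) : EReal) := by
      rw [pathCost_eq_add x hjk]
      exact EReal.coe_le_coe (by linarith)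
end

section
/- (Remark 2, integrality in the singleton case) Let G=(V,E) be a graph of convex sets in which every set is a singleton, X_v = {x_v} with x_v ∈ ℝ^n, let h: V → ℝ be a heuristic, let S be a cut-set and S' ⊆ N_S nonempty, and suppose there exists a path (v_1=s,…,v_l) with v_i ∈ S for i<l and v_l ∈ S' (so both problems below are feasible). Then the convex relaxation is exact: R*_opt(S,S') = C*_opt(S,S'). -/
open scoped BigOperators Pointwise Classical

namespace Stmt12Aux

open Finset

noncomputable section

variable {V : Type*} {n : ℕ}

lemma pathCost_nonneg (k : ℕ) (x : ℕ → EuclideanSpace ℝ (Fin n)) : 0 ≤ pathCost k x :=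
  Finset.sum_nonneg fun _ _ => norm_nonneg _

lemma pathCost_eq (G : GCS V n) (pt : V → EuclideanSpace ℝ (Fin n))
    (hsing : ∀ v : V, G.X v = {pt v}) (k : ℕ) (v : ℕ → V)
    (x : ℕ → EuclideanSpace ℝ (Fin n)) (hx : ∀ i, i < k → x i ∈ G.X (v i)) :
    pathCost k x = pathCost k (pt ∘ v) := by
  unfold pathCost
  apply Finset.sum_congr rfl
  intro i hi
  rw [Finset.mem_range] at hi
  have h1 : x i = pt (v i) := by
    have := hx i (by omega); rwa [hsing, Set.mem_singleton_iff] at this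
  have h2 : x (i + 1) = pt (v (i + 1)) := by
    have := hx (i + 1) (by omega); rwa [hsing, Set.mem_singleton_iff] at this
  simp [h1, h2, Function.comp]

/-- The set of achievable values of "path cost + heuristic" for paths starting at `a`. -/
def Dset (G : GCS V n) (pt : V → EuclideanSpace ℝ (Fin n)) (h : V → ℝ)
    (S S' : Finset V) (a : V) : Set ℝ :=
  {c | ∃ (k : ℕ) (v : ℕ → V), 1 ≤ k ∧ (∀ i, i + 1 < k → (v i, v (i + 1)) ∈ G.E) ∧
    v 0 = a ∧ (∀ i, i < k - 1 → v i ∈ S) ∧ v (k - 1) ∈ S' ∧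
    c = pathCost k (pt ∘ v) + h (v (k - 1))}

variable {G : GCS V n} {pt : V → EuclideanSpace ℝ (Fin n)} {h : V → ℝ} {S S' : Finset V}

lemma Dset_lb (hne : S'.Nonempty) {a : V} {c : ℝ} (hc : c ∈ Dset G pt h S S' a) :
    S'.inf' hne h ≤ c := by
  obtain ⟨k, v, hk, -, -, -, hterm, rfl⟩ := hc
  have := Finset.inf'_le h hterm
  have := pathCost_nonneg k (pt ∘ v)
  linarith

lemma Dset_bddBelow (hne : S'.Nonempty) (a : V) : BddBelow (Dset G pt h S S' a) :=
  ⟨S'.inf' hne h, fun _ hc => Dset_lb hne hc⟩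

lemma mem_Dset_self {a : V} (ha : a ∈ S') : h a ∈ Dset G pt h S S' a := by
  refine ⟨1, fun _ => a, le_refl 1, by omega, rfl, by omega, ha, ?_⟩
  simp [pathCost]

lemma Dset_prepend {u w : V} (hE : (u, w) ∈ G.E) (hu : u ∈ S) {c : ℝ}
    (hc : c ∈ Dset G pt h S S' w) : ‖pt u - pt w‖ + c ∈ Dset G pt h S S' u := by
  obtain ⟨k, v, hk, hEe, hv0, hmem, hterm, rfl⟩ := hc
  refine ⟨k + 1, fun m => if m = 0 then u else v (m - 1), by omega, ?_, by simp, ?_, ?_, ?_⟩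
  · intro i hi
    rcases Nat.eq_zero_or_pos i with rfl | hpos
    · simpa [hv0] using hE
    · have h1 : i ≠ 0 := by omega
      have h2 : i + 1 ≠ 0 := by omega
      simp only [h1, h2, if_neg, ite_false]
      have : i - 1 + 1 = i := by omega
      have he := hEe (i - 1) (by omega)
      rwa [this] at he
  · intro i hi
    rcases Nat.eq_zero_or_pos i with rfl | hpos
    · simpa using hu
    · have h1 : i ≠ 0 := by omega
      simp only [h1, ite_false]
      exact hmem (i - 1) (by omega)
  · have h1 : k + 1 - 1 = k := by omega
    have h2 : k ≠ 0 := by omega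
    simp only [h1, h2, ite_false]
    exact hterm
  · have h1 : k + 1 - 1 = k := by omega
    have h2 : k ≠ 0 := by omega
    simp only [h1, h2, ite_false]
    have hcost : pathCost (k + 1) (pt ∘ fun m => if m = 0 then u else v (m - 1))
        = ‖pt u - pt w‖ + pathCost k (pt ∘ v) := by
      unfold pathCost
      obtain ⟨kk, rfl⟩ : ∃ kk, k = kk + 1 := ⟨k - 1, by omega⟩
      simp only [Nat.add_sub_cancel]
      rw [Finset.sum_range_succ']
      rw [add_comm]
      congr 1
      simp [Function.comp, hv0]
    rw [hcost]
    ring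

/-- Real-valued distance-to-`S'` (inf of `Dset`). -/
def DR (G : GCS V n) (pt : V → EuclideanSpace ℝ (Fin n)) (h : V → ℝ)
    (S S' : Finset V) (a : V) : ℝ := sInf (Dset G pt h S S' a)

/-- A uniform upper bound on all (finite) distances. -/
def Mbig (G : GCS V n) (pt : V → EuclideanSpace ℝ (Fin n)) (h : V → ℝ)
    (S S' : Finset V) [Fintype V] [Nonempty V] : ℝ :=
  Finset.univ.sup' Finset.univ_nonempty (DR G pt h S S')

/-- Truncated potential. -/
def pot (G : GCS V n) (pt : V → EuclideanSpace ℝ (Fin n)) (h : V → ℝ)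
    (S S' : Finset V) [Fintype V] [Nonempty V] (a : V) : ℝ :=
  if (Dset G pt h S S' a).Nonempty then DR G pt h S S' a else Mbig G pt h S S'

variable [Fintype V] [Nonempty V]

lemma pot_le_M (a : V) : pot G pt h S S' a ≤ Mbig G pt h S S' := by
  unfold pot
  split
  · exact Finset.le_sup' (DR G pt h S S') (Finset.mem_univ a)
  · exact le_refl _

lemma pot_le_h (hne : S'.Nonempty) {a : V} (ha : a ∈ S') : pot G pt h S S' a ≤ h a := by
  have hmem := mem_Dset_self (G := G) (pt := pt) (h := h) (S := S) ha
  rw [pot, if_pos ⟨h a, hmem⟩]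
  exact csInf_le (Dset_bddBelow hne a) hmem

lemma pot_triangle (hne : S'.Nonempty) {u w : V} (hE : (u, w) ∈ G.E) (hu : u ∈ S) :
    pot G pt h S S' u ≤ ‖pt u - pt w‖ + pot G pt h S S' w := by
  by_cases hw : (Dset G pt h S S' w).Nonempty
  · obtain ⟨c, hc⟩ := hw
    have hune : (Dset G pt h S S' u).Nonempty := ⟨_, Dset_prepend hE hu hc⟩
    rw [pot, if_pos hune, pot, if_pos ⟨c, hc⟩]
    have key : DR G pt h S S' u - ‖pt u - pt w‖ ≤ DR G pt h S S' w := by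
      apply le_csInf ⟨c, hc⟩
      intro b hb
      have := csInf_le (Dset_bddBelow hne u) (Dset_prepend hE hu hb)
      unfold DR
      linarith
    unfold DR at key ⊢
    linarith
  · have hwM : pot G pt h S S' w = Mbig G pt h S S' := by
      unfold pot; rw [if_neg hw]
    rw [hwM]
    have h1 := pot_le_M (G := G) (pt := pt) (h := h) (S := S) (S' := S') u
    have h2 := norm_nonneg (pt u - pt w)
    linarith

lemma ereal_sInf_image {A : Set ℝ} (hA : A.Nonempty) (hb : BddBelow A) :
    sInf ((fun r : ℝ => (r : EReal)) '' A) = ((sInf A : ℝ) : EReal) := by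
  apply le_antisymm
  · by_contra hcon
    push_neg at hcon
    obtain ⟨q, hq1, hq2⟩ := EReal.exists_between_coe_real hcon
    obtain ⟨x, hxA, hxq⟩ := exists_lt_of_csInf_lt hA (by exact_mod_cast hq1)
    have h1 : sInf ((fun r : ℝ => (r : EReal)) '' A) ≤ (x : EReal) :=
      sInf_le ⟨x, hxA, rfl⟩
    have h2 : (x : EReal) < (q : EReal) := by exact_mod_cast hxq
    exact absurd (h1.trans_lt (h2.trans hq2)) (lt_irrefl _)
  · apply le_sInf
    rintro b ⟨x, hxA, rfl⟩
    show ((sInf A : ℝ) : EReal) ≤ (x : EReal)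
    exact_mod_cast csInf_le hb hxA


lemma weak_duality (hsing : ∀ v : V, G.X v = {pt v}) {s : V} (hs : s ∈ S)
    (hdisj : Disjoint S S') (hne : S'.Nonempty)
    (y : V × V → ℝ) (α : V → ℝ) (z z' : V × V → EuclideanSpace ℝ (Fin n))
    (hF : G.RelaxFeasible s S S' y α z z') :
    pot G pt h S S' s ≤ G.relaxObj h S S' y α z z' := by
  obtain ⟨hy01, hα01, hαsum, hsrc, hin, hcons, hpersp⟩ := hF
  set EB := G.Ebar S S' with hEB
  set π : V → ℝ := pot G pt h S S' with hπ
  have hmemE : ∀ e ∈ EB, e.1 ∈ S ∧ e.2 ∈ S ∪ S' ∧ e ∈ G.E := by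
    intro e he
    rw [hEB, GCS.Ebar, Finset.mem_filter] at he
    exact ⟨he.2.1, he.2.2, he.1⟩
  have hznorm : ∀ e ∈ EB, ‖z e - z' e‖ = y e * ‖pt e.1 - pt e.2‖ := by
    intro e he
    obtain ⟨⟨hy0, hz⟩, -, hz'⟩ := hpersp e he
    rw [hsing, Set.smul_set_singleton, Set.mem_singleton_iff] at hz hz'
    dsimp only at hy0 hz hz'
    rw [hz, hz', ← smul_sub, norm_smul, Real.norm_eq_abs, abs_of_nonneg hy0]
  have hedge : ∀ e ∈ EB, y e * (π e.1 - π e.2) ≤ y e * ‖pt e.1 - pt e.2‖ := by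
    intro e he
    obtain ⟨h1, h2, h3⟩ := hmemE e he
    have h3' : (e.1, e.2) ∈ G.E := by rwa [Prod.mk.eta]
    have htri := pot_triangle (G := G) (pt := pt) (h := h) hne h3' h1
    rw [← hπ] at htri
    exact mul_le_mul_of_nonneg_left (by linarith) (hy01 e he).1
  have hfib1 : ∀ f : V × V → ℝ,
      ∑ u ∈ S, ∑ e ∈ EB.filter (fun e => e.1 = u), f e = ∑ e ∈ EB, f e :=
    fun f => Finset.sum_fiberwise_of_maps_to (fun e he => (hmemE e he).1) f
  have hfib2 : ∀ f : V × V → ℝ,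
      ∑ u ∈ S ∪ S', ∑ e ∈ EB.filter (fun e => e.2 = u), f e = ∑ e ∈ EB, f e :=
    fun f => Finset.sum_fiberwise_of_maps_to (fun e he => (hmemE e he).2.1) f
  -- sums of y * π over fibers
  have hsum1 : ∑ e ∈ EB, y e * π e.1
      = ∑ u ∈ S, π u * ∑ e ∈ EB.filter (fun e => e.1 = u), y e := by
    rw [← hfib1 (fun e => y e * π e.1)]
    refine Finset.sum_congr rfl fun u hu => ?_
    rw [Finset.mul_sum]
    refine Finset.sum_congr rfl fun e he => ?_
    rw [Finset.mem_filter] at he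
    rw [he.2]; ring
  have hsum2 : ∑ e ∈ EB, y e * π e.2
      = ∑ u ∈ S ∪ S', π u * ∑ e ∈ EB.filter (fun e => e.2 = u), y e := by
    rw [← hfib2 (fun e => y e * π e.2)]
    refine Finset.sum_congr rfl fun u hu => ?_
    rw [Finset.mul_sum]
    refine Finset.sum_congr rfl fun e he => ?_
    rw [Finset.mem_filter] at he
    rw [he.2]; ring
  -- conservation bookkeeping
  have hSsplit : ∀ f : V → ℝ, ∑ u ∈ S, f u = f s + ∑ u ∈ S.erase s, f u :=
    fun f => (Finset.add_sum_erase S f hs).symm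
  have hUsplit : ∀ f : V → ℝ, ∑ u ∈ S ∪ S', f u = ∑ u ∈ S, f u + ∑ u ∈ S', f u :=
    fun f => Finset.sum_union hdisj
  have hInS' : ∑ u ∈ S', (∑ e ∈ EB.filter (fun e => e.2 = u), y e) = 1 := by
    rw [Finset.sum_congr rfl (fun u hu => hin u hu)]
    exact hαsum
  have hconsE : ∀ u ∈ S.erase s,
      (∑ e ∈ EB.filter (fun e => e.2 = u), y e)
        = (∑ e ∈ EB.filter (fun e => e.1 = u), y e) := by
    intro u hu
    rw [Finset.mem_erase] at hu
    exact (hcons u hu.2 hu.1).2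
  have hins : (∑ e ∈ EB.filter (fun e => e.2 = s), y e) = 0 := by
    have h1 : ∑ u ∈ S, (∑ e ∈ EB.filter (fun e => e.1 = u), y e)
        = ∑ u ∈ S ∪ S', (∑ e ∈ EB.filter (fun e => e.2 = u), y e) := by
      rw [hfib1 (fun e => y e), hfib2 (fun e => y e)]
    rw [hSsplit (fun u => ∑ e ∈ EB.filter (fun e => e.1 = u), y e),
        hUsplit (fun u => ∑ e ∈ EB.filter (fun e => e.2 = u), y e),
        hSsplit (fun u => ∑ e ∈ EB.filter (fun e => e.2 = u), y e)] at h1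
    rw [hsrc, hInS', Finset.sum_congr rfl hconsE] at h1
    linarith
  -- the in-flow at s is nonneg
  -- main chain
  have hchain : ∑ e ∈ EB, y e * (π e.1 - π e.2) = π s - ∑ u ∈ S', π u * α u := by
    have hexp : ∑ e ∈ EB, y e * (π e.1 - π e.2)
        = (∑ e ∈ EB, y e * π e.1) - ∑ e ∈ EB, y e * π e.2 := by
      rw [← Finset.sum_sub_distrib]
      exact Finset.sum_congr rfl fun e _ => by ring
    rw [hexp, hsum1, hsum2,
        hSsplit (fun u => π u * ∑ e ∈ EB.filter (fun e => e.1 = u), y e),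
        hUsplit (fun u => π u * ∑ e ∈ EB.filter (fun e => e.2 = u), y e),
        hSsplit (fun u => π u * ∑ e ∈ EB.filter (fun e => e.2 = u), y e)]
    rw [hsrc, hins]
    have hmid : ∑ u ∈ S.erase s, π u * (∑ e ∈ EB.filter (fun e => e.2 = u), y e)
        = ∑ u ∈ S.erase s, π u * (∑ e ∈ EB.filter (fun e => e.1 = u), y e) :=
      Finset.sum_congr rfl fun u hu => by rw [hconsE u hu]
    have hlast : ∑ u ∈ S', π u * (∑ e ∈ EB.filter (fun e => e.2 = u), y e)
        = ∑ u ∈ S', π u * α u :=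
      Finset.sum_congr rfl fun u hu => by rw [hin u hu]
    rw [hmid, hlast]
    ring
  have hobj1 : ∑ e ∈ EB, ‖z e - z' e‖ = ∑ e ∈ EB, y e * ‖pt e.1 - pt e.2‖ :=
    Finset.sum_congr rfl hznorm
  have hobj2 : ∑ e ∈ EB, y e * (π e.1 - π e.2) ≤ ∑ e ∈ EB, y e * ‖pt e.1 - pt e.2‖ :=
    Finset.sum_le_sum hedge
  have hslack : 0 ≤ ∑ u ∈ S', (α u * h u - π u * α u) := by
    apply Finset.sum_nonneg
    intro u hu
    have h1 := (hα01 u hu).1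
    have h2 : π u ≤ h u := pot_le_h hne hu
    nlinarith
  have hsplit2 : ∑ u ∈ S', (α u * h u - π u * α u)
      = (∑ u ∈ S', α u * h u) - ∑ u ∈ S', π u * α u := by
    rw [← Finset.sum_sub_distrib]
  rw [GCS.relaxObj, ← hEB, hobj1]
  rw [hchain] at hobj2
  linarith

lemma Cstar_eq (hsing : ∀ v : V, G.X v = {pt v}) (s : V)
    (hfeasD : (Dset G pt h S S' s).Nonempty) (hne : S'.Nonempty) :
    G.CstarOpt h s S S' = ((sInf (Dset G pt h S S' s) : ℝ) : EReal) := by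
  have hset : {c : EReal | ∃ (k : ℕ) (v : ℕ → V) (x : ℕ → EuclideanSpace ℝ (Fin n)),
      G.IsPathOn k v x ∧ v 0 = s ∧ (∀ i, i < k - 1 → v i ∈ S) ∧ v (k - 1) ∈ S' ∧
      c = ((pathCost k x + h (v (k - 1)) : ℝ) : EReal)}
      = (fun r : ℝ => (r : EReal)) '' Dset G pt h S S' s := by
    ext c
    constructor
    · rintro ⟨k, v, x, ⟨hk, hE, hx⟩, hv0, hmem, hterm, rfl⟩
      exact ⟨pathCost k (pt ∘ v) + h (v (k - 1)), ⟨k, v, hk, hE, hv0, hmem, hterm, rfl⟩,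
        by rw [pathCost_eq G pt hsing k v x hx]⟩
    · rintro ⟨r, ⟨k, v, hk, hE, hv0, hmem, hterm, rfl⟩, rfl⟩
      exact ⟨k, v, pt ∘ v, ⟨hk, hE, fun i hi => by
        rw [hsing]; exact Set.mem_singleton _⟩, hv0, hmem, hterm, rfl⟩
  rw [GCS.CstarOpt, hset]
  exact ereal_sInf_image hfeasD (Dset_bddBelow hne s)

lemma exists_simple (G : GCS V n) (pt : V → EuclideanSpace ℝ (Fin n)) (S S' : Finset V) :
    ∀ k : ℕ, ∀ v : ℕ → V, 1 ≤ k → (∀ i, i + 1 < k → (v i, v (i + 1)) ∈ G.E) →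
      (∀ i, i < k - 1 → v i ∈ S) → v (k - 1) ∈ S' →
      ∃ (k' : ℕ) (w : ℕ → V), 1 ≤ k' ∧ (∀ i, i + 1 < k' → (w i, w (i + 1)) ∈ G.E) ∧
        (∀ i, i < k' - 1 → w i ∈ S) ∧ w (k' - 1) = v (k - 1) ∧ w 0 = v 0 ∧
        (∀ i j, i < k' → j < k' → w i = w j → i = j) ∧
        pathCost k' (pt ∘ w) ≤ pathCost k (pt ∘ v) := by
  intro k
  induction k using Nat.strong_induction_on with
  | _ k IH =>
    intro v hk hE hS hterm
    by_cases hinj : ∀ i j, i < k → j < k → v i = v j → i = j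
    · exact ⟨k, v, hk, hE, hS, rfl, rfl, hinj, le_refl _⟩
    · push_neg at hinj
      obtain ⟨i0, j0, hi0, hj0, heq, hne0⟩ := hinj
      obtain ⟨i, j, hij, hjk, hveq⟩ : ∃ i j, i < j ∧ j < k ∧ v i = v j := by
        rcases Nat.lt_or_ge i0 j0 with hlt | hge
        · exact ⟨i0, j0, hlt, hj0, heq⟩
        · exact ⟨j0, i0, by omega, hi0, heq.symm⟩
      set δ := j - i with hδ
      set k₂ := k - δ with hk₂
      have hδ1 : 1 ≤ δ := by omega
      have hik2 : i < k₂ := by omega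
      have hrec : k₂ < k := by omega
      set w : ℕ → V := fun m => if m ≤ i then v m else v (m + δ) with hw
      have hwval : ∀ m, i ≤ m → w m = v (m + δ) := by
        intro m hm
        rcases Nat.eq_or_lt_of_le hm with rfl | hlt
        · simp only [hw, le_refl, if_pos]
          rw [hveq]; congr 1; omega
        · simp only [hw]; rw [if_neg (by omega)]
      have hwval' : ∀ m, m ≤ i → w m = v m := by
        intro m hm; simp only [hw]; rw [if_pos hm]
      have hE₂ : ∀ m, m + 1 < k₂ → (w m, w (m + 1)) ∈ G.E := by
        intro m hm
        by_cases hmi : m + 1 ≤ i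
        · rw [hwval' m (by omega), hwval' (m + 1) hmi]
          exact hE m (by omega)
        · rw [hwval m (by omega), hwval (m + 1) (by omega)]
          have h3 : m + 1 + δ = m + δ + 1 := by omega
          rw [h3]
          exact hE (m + δ) (by omega)
      have hS₂ : ∀ m, m < k₂ - 1 → w m ∈ S := by
        intro m hm
        by_cases hmi : m ≤ i
        · rw [hwval' m hmi]; exact hS m (by omega)
        · rw [hwval m (by omega)]; exact hS (m + δ) (by omega)
      have hterm₂ : w (k₂ - 1) = v (k - 1) := by
        rw [hwval (k₂ - 1) (by omega)]
        congr 1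
        omega
      have hw0 : w 0 = v 0 := hwval' 0 (by omega)
      have hcost : pathCost k₂ (pt ∘ w) ≤ pathCost k (pt ∘ v) := by
        set ι : ℕ → ℕ := fun m => if m < i then m else m + δ with hι
        have hstep : ∀ m ∈ Finset.range (k₂ - 1),
            ‖(pt ∘ w) m - (pt ∘ w) (m + 1)‖
              = (fun m' => ‖(pt ∘ v) m' - (pt ∘ v) (m' + 1)‖) (ι m) := by
          intro m hm
          rw [Finset.mem_range] at hm
          by_cases hmi : m < i
          · have e1 : w m = v m := hwval' m (by omega)
            have e2 : w (m + 1) = v (m + 1) := hwval' (m + 1) (by omega)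
            simp only [hι, Function.comp, if_pos hmi, e1, e2]
          · have e1 : w m = v (m + δ) := hwval m (by omega)
            have e2 : w (m + 1) = v (m + 1 + δ) := hwval (m + 1) (by omega)
            have e3 : m + 1 + δ = m + δ + 1 := by omega
            rw [e3] at e2
            simp only [hι, Function.comp, if_neg hmi, e1, e2]
        have hinj' : ∀ x ∈ Finset.range (k₂ - 1), ∀ y ∈ Finset.range (k₂ - 1),
            ι x = ι y → x = y := by
          intro x hx y hy hxy
          simp only [hι] at hxy
          split_ifs at hxy <;> omega
        have hsub : (Finset.range (k₂ - 1)).image ι ⊆ Finset.range (k - 1) := by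
          intro m' hm'
          rw [Finset.mem_image] at hm'
          obtain ⟨m, hm, rfl⟩ := hm'
          rw [Finset.mem_range] at hm ⊢
          simp only [hι]
          split_ifs <;> omega
        calc pathCost k₂ (pt ∘ w)
            = ∑ m ∈ Finset.range (k₂ - 1),
                (fun m' => ‖(pt ∘ v) m' - (pt ∘ v) (m' + 1)‖) (ι m) :=
              Finset.sum_congr rfl hstep
          _ = ∑ m' ∈ (Finset.range (k₂ - 1)).image ι,
                ‖(pt ∘ v) m' - (pt ∘ v) (m' + 1)‖ := by rw [Finset.sum_image hinj']
          _ ≤ ∑ m' ∈ Finset.range (k - 1), ‖(pt ∘ v) m' - (pt ∘ v) (m' + 1)‖ :=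
              Finset.sum_le_sum_of_subset_of_nonneg hsub (fun _ _ _ => norm_nonneg _)
          _ = pathCost k (pt ∘ v) := rfl
      obtain ⟨k', w', p1, p2, p3, p4, p5, p6, p7⟩ :=
        IH k₂ hrec w (by omega) hE₂ hS₂ (hterm₂ ▸ hterm)
      exact ⟨k', w', p1, p2, p3, by rw [p4, hterm₂], by rw [p5, hw0], p6, p7.trans hcost⟩

/-- Indicator flow of a path. -/
def yOf (v : ℕ → V) (k : ℕ) (e : V × V) : ℝ :=
  ∑ i ∈ Finset.range (k - 1), if e = (v i, v (i + 1)) then (1 : ℝ) else 0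

lemma sum_yOf (v : ℕ → V) (k : ℕ) (F : Finset (V × V)) (g : V × V → ℝ) :
    ∑ e ∈ F, yOf v k e * g e
      = ∑ i ∈ Finset.range (k - 1),
          if (v i, v (i + 1)) ∈ F then g (v i, v (i + 1)) else 0 := by
  have h1 : ∀ e ∈ F, yOf v k e * g e
      = ∑ i ∈ Finset.range (k - 1), if e = (v i, v (i + 1)) then g (v i, v (i + 1)) else 0 := by
    intro e _
    rw [yOf, Finset.sum_mul]
    refine Finset.sum_congr rfl fun i _ => ?_
    by_cases hei : e = (v i, v (i + 1))
    · rw [if_pos hei, if_pos hei, one_mul, hei]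
    · rw [if_neg hei, if_neg hei, zero_mul]
  rw [Finset.sum_congr rfl h1, Finset.sum_comm]
  refine Finset.sum_congr rfl fun i _ => ?_
  exact Finset.sum_ite_eq' F (v i, v (i + 1)) (fun e => g (v i, v (i + 1)))

lemma sum_yOf_one (v : ℕ → V) (k : ℕ) (F : Finset (V × V)) :
    ∑ e ∈ F, yOf v k e
      = ∑ i ∈ Finset.range (k - 1), if (v i, v (i + 1)) ∈ F then (1 : ℝ) else 0 := by
  have := sum_yOf v k F (fun _ => (1 : ℝ))
  simpa using this

lemma yOf_nonneg (v : ℕ → V) (k : ℕ) (e : V × V) : 0 ≤ yOf v k e :=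
  Finset.sum_nonneg fun _ _ => by positivity

lemma relax_of_simple (hsing : ∀ v : V, G.X v = {pt v}) {s : V} (hs : s ∈ S)
    (hdisj : Disjoint S S') (k : ℕ) (v : ℕ → V) (hk : 2 ≤ k)
    (hE : ∀ i, i + 1 < k → (v i, v (i + 1)) ∈ G.E) (hv0 : v 0 = s)
    (hSm : ∀ i, i < k - 1 → v i ∈ S) (hterm : v (k - 1) ∈ S')
    (hinj : ∀ i j, i < k → j < k → v i = v j → i = j) :
    ∃ y α z z', G.RelaxFeasible s S S' y α z z' ∧
      G.relaxObj h S S' y α z z' = pathCost k (pt ∘ v) + h (v (k - 1)) := by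
  have hdisj' : ∀ u ∈ S', u ∉ S := fun u hu hu' =>
    Finset.disjoint_left.mp hdisj hu' hu
  set y : V × V → ℝ := yOf v k with hy
  set α : V → ℝ := fun u => if u = v (k - 1) then 1 else 0 with hα
  have hEbar : ∀ i, i < k - 1 → (v i, v (i + 1)) ∈ G.Ebar S S' := by
    intro i hi
    rw [GCS.Ebar, Finset.mem_filter]
    refine ⟨hE i (by omega), hSm i hi, ?_⟩
    rcases Nat.lt_or_ge (i + 1) (k - 1) with hlt | hge
    · exact Finset.mem_union_left _ (hSm (i + 1) hlt)
    · have hi1 : i + 1 = k - 1 := by omega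
      rw [hi1]; exact Finset.mem_union_right _ hterm
  have hy01 : ∀ e, y e = 0 ∨ y e = 1 := by
    intro e
    by_cases he : ∃ i ∈ Finset.range (k - 1), e = (v i, v (i + 1))
    · right
      obtain ⟨i0, hi0, rfl⟩ := he
      rw [hy, yOf, Finset.sum_eq_single_of_mem i0 hi0, if_pos rfl]
      intro j hj hne
      apply if_neg
      intro hcon
      rw [Finset.mem_range] at hi0 hj
      have h1 : v i0 = v j := congrArg Prod.fst hcon
      exact hne (hinj j i0 (by omega) (by omega) h1.symm)
    · left
      rw [hy, yOf]
      apply Finset.sum_eq_zero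
      intro i hi
      apply if_neg
      intro hcon
      exact he ⟨i, hi, hcon⟩
  have hy0 : ∀ e, 0 ≤ y e := fun e => yOf_nonneg v k e
  -- in/out counting
  have hOut : ∀ u : V, ∑ e ∈ (G.Ebar S S').filter (fun e => e.1 = u), y e
      = ∑ i ∈ Finset.range (k - 1), if v i = u then (1 : ℝ) else 0 := by
    intro u
    rw [hy, sum_yOf_one]
    refine Finset.sum_congr rfl fun i hi => ?_
    rw [Finset.mem_range] at hi
    by_cases hiu : v i = u
    · rw [if_pos hiu, if_pos (Finset.mem_filter.mpr ⟨hEbar i hi, hiu⟩)]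
    · rw [if_neg hiu]
      apply if_neg
      intro hc
      exact hiu (Finset.mem_filter.mp hc).2
  have hIn : ∀ u : V, ∑ e ∈ (G.Ebar S S').filter (fun e => e.2 = u), y e
      = ∑ i ∈ Finset.range (k - 1), if v (i + 1) = u then (1 : ℝ) else 0 := by
    intro u
    rw [hy, sum_yOf_one]
    refine Finset.sum_congr rfl fun i hi => ?_
    rw [Finset.mem_range] at hi
    by_cases hiu : v (i + 1) = u
    · rw [if_pos hiu, if_pos (Finset.mem_filter.mpr ⟨hEbar i hi, hiu⟩)]
    · rw [if_neg hiu]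
      apply if_neg
      intro hc
      exact hiu (Finset.mem_filter.mp hc).2
  have hsrc : ∑ e ∈ (G.Ebar S S').filter (fun e => e.1 = s), y e = 1 := by
    rw [hOut s]
    have hcong : ∀ i ∈ Finset.range (k - 1),
        (if v i = s then (1 : ℝ) else 0) = if i = 0 then 1 else 0 := by
      intro i hi
      rw [Finset.mem_range] at hi
      by_cases h0 : i = 0
      · subst h0; rw [if_pos hv0, if_pos rfl]
      · rw [if_neg h0, if_neg (fun hc => h0 (hinj i 0 (by omega) (by omega)
          (by rw [hc, hv0])))]
    rw [Finset.sum_congr rfl hcong, Finset.sum_ite_eq' (Finset.range (k - 1)) 0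
      (fun _ => (1 : ℝ)), if_pos (Finset.mem_range.mpr (by omega))]
  have hinflow : ∀ u ∈ S', ∑ e ∈ (G.Ebar S S').filter (fun e => e.2 = u), y e = α u := by
    intro u hu
    rw [hIn u]
    by_cases huv : u = v (k - 1)
    · have hcong : ∀ i ∈ Finset.range (k - 1),
          (if v (i + 1) = u then (1 : ℝ) else 0) = if i = k - 2 then 1 else 0 := by
        intro i hi
        rw [Finset.mem_range] at hi
        by_cases h2 : i = k - 2
        · subst h2
          rw [if_pos (by rw [huv]; congr 1; omega), if_pos rfl]
        · refine (if_neg ?_).trans (if_neg h2).symm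
          intro hc
          rcases Nat.lt_or_ge (i + 1) (k - 1) with hlt | hge
          · exact hdisj' u hu (hc ▸ hSm (i + 1) hlt)
          · exact h2 (by omega)
      rw [Finset.sum_congr rfl hcong, Finset.sum_ite_eq' (Finset.range (k - 1)) (k - 2)
        (fun _ => (1 : ℝ)), if_pos (Finset.mem_range.mpr (by omega))]
      simp only [hα]
      rw [if_pos huv]
    · simp only [hα]
      rw [if_neg huv]
      apply Finset.sum_eq_zero
      intro i hi
      rw [Finset.mem_range] at hi
      apply if_neg
      intro hc
      rcases Nat.lt_or_ge (i + 1) (k - 1) with hlt | hge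
      · exact hdisj' u hu (hc ▸ hSm (i + 1) hlt)
      · exact huv (by rw [← hc]; congr 1; omega)
  have hycons : ∀ u ∈ S, u ≠ s →
      ∑ e ∈ (G.Ebar S S').filter (fun e => e.2 = u), y e
        = ∑ e ∈ (G.Ebar S S').filter (fun e => e.1 = u), y e := by
    intro u huS hus
    rw [hIn u, hOut u]
    obtain ⟨m, rfl⟩ : ∃ m, k = m + 1 + 1 := ⟨k - 2, by omega⟩
    simp only [Nat.add_sub_cancel]
    set P : ℕ → ℝ := fun j => if v j = u then (1 : ℝ) else 0 with hP
    have hP0 : P 0 = 0 := by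
      simp only [hP]
      apply if_neg
      intro hc
      exact hus (by rw [← hc, hv0])
    have hPtop : P (m + 1) = 0 := by
      simp only [hP]
      apply if_neg
      intro hc
      have hu' : u ∈ S' := by
        rw [← hc]
        simpa using hterm
      exact hdisj' u hu' huS
    have h1 : ∑ i ∈ Finset.range (m + 1 + 1), P i
        = (∑ i ∈ Finset.range (m + 1), P (i + 1)) + P 0 := Finset.sum_range_succ' P (m + 1)
    have h2 : ∑ i ∈ Finset.range (m + 1 + 1), P i
        = (∑ i ∈ Finset.range (m + 1), P i) + P (m + 1) := Finset.sum_range_succ P (m + 1)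
    have : (∑ i ∈ Finset.range (m + 1), P (i + 1)) = ∑ i ∈ Finset.range (m + 1), P i := by
      rw [hP0] at h1; rw [hPtop] at h2; linarith
    exact this
  refine ⟨y, α, fun e => y e • pt e.1, fun e => y e • pt e.2, ⟨?_, ?_, ?_, hsrc, hinflow, ?_, ?_⟩, ?_⟩
  · intro e _
    rcases hy01 e with h0 | h1
    · rw [h0]; exact ⟨le_refl 0, by norm_num⟩
    · rw [h1]; exact ⟨by norm_num, le_refl 1⟩
  · intro u _
    simp only [hα]
    split_ifs
    · exact ⟨by norm_num, le_refl 1⟩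
    · exact ⟨le_refl 0, by norm_num⟩
  · simp only [hα]
    rw [Finset.sum_ite_eq' S' (v (k - 1)) (fun _ => (1 : ℝ))]
    exact if_pos hterm
  · intro u huS hus
    constructor
    · have hl : ∀ e ∈ (G.Ebar S S').filter (fun e => e.2 = u),
          y e • pt e.2 = y e • pt u := by
        intro e he
        rw [(Finset.mem_filter.mp he).2]
      have hr : ∀ e ∈ (G.Ebar S S').filter (fun e => e.1 = u),
          y e • pt e.1 = y e • pt u := by
        intro e he
        rw [(Finset.mem_filter.mp he).2]
      rw [Finset.sum_congr rfl hl, Finset.sum_congr rfl hr, ← Finset.sum_smul,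
        ← Finset.sum_smul, hycons u huS hus]
    · exact hycons u huS hus
  · intro e _
    constructor
    · refine ⟨hy0 e, ?_⟩
      rw [hsing, Set.smul_set_singleton]
      exact rfl
    · refine ⟨hy0 e, ?_⟩
      rw [hsing, Set.smul_set_singleton]
      exact rfl
  · rw [GCS.relaxObj]
    have hnorm : ∀ e ∈ G.Ebar S S',
        ‖y e • pt e.1 - y e • pt e.2‖ = y e * ‖pt e.1 - pt e.2‖ := by
      intro e _
      rw [← smul_sub, norm_smul, Real.norm_eq_abs, abs_of_nonneg (hy0 e)]
    rw [Finset.sum_congr rfl hnorm, hy, sum_yOf v k (G.Ebar S S')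
      (fun e => ‖pt e.1 - pt e.2‖)]
    have hterm1 : ∑ i ∈ Finset.range (k - 1),
        (if (v i, v (i + 1)) ∈ G.Ebar S S' then ‖pt (v i) - pt (v (i + 1))‖ else 0)
        = pathCost k (pt ∘ v) := by
      refine Finset.sum_congr rfl fun i hi => ?_
      rw [Finset.mem_range] at hi
      rw [if_pos (hEbar i hi)]
      rfl
    have hterm2 : ∑ u ∈ S', α u * h u = h (v (k - 1)) := by
      simp only [hα]
      have : ∀ u ∈ S', (if u = v (k - 1) then (1 : ℝ) else 0) * h u
          = if u = v (k - 1) then h u else 0 := by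
        intro u _
        split_ifs <;> ring
      rw [Finset.sum_congr rfl this, Finset.sum_ite_eq' S' (v (k - 1)) h]
      exact if_pos hterm
    rw [hterm1, hterm2]

end

end Stmt12Aux
/-- Remark 2: When every convex set is a singleton `X_v = {pt v}`, and the
problems are feasible, the convex relaxation is exact: `R*_opt(S,S') = C*_opt(S,S')`. -/
theorem stmt12 {V : Type*} [Fintype V] {n : ℕ} (G : GCS V n)
    (pt : V → EuclideanSpace ℝ (Fin n)) (hsing : ∀ v : V, G.X v = {pt v})
    (h : V → ℝ) (s d : V) (S S' : Finset V) (hs : s ∈ S) (hd : d ∉ S)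
    (hsub : S' ⊆ G.nbr S) (hne : S'.Nonempty)
    (hfeas : ∃ (k : ℕ) (v : ℕ → V) (x : ℕ → EuclideanSpace ℝ (Fin n)),
      G.IsPathOn k v x ∧ v 0 = s ∧ (∀ i, i < k - 1 → v i ∈ S) ∧ v (k - 1) ∈ S') :
    G.RstarOpt h s S S' = G.CstarOpt h s S S' := by
  haveI : Nonempty V := ⟨s⟩
  have hdisj : Disjoint S S' := by
    rw [Finset.disjoint_left]
    intro a haS haS'
    have hmem := hsub haS'
    rw [GCS.nbr, Finset.mem_filter] at hmem
    exact hmem.2.1 haS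
  have hfeasD : (Stmt12Aux.Dset G pt h S S' s).Nonempty := by
    obtain ⟨k, v, x, ⟨hk, hE, hx⟩, hv0, hmem, hterm⟩ := hfeas
    exact ⟨pathCost k (pt ∘ v) + h (v (k - 1)), k, v, hk, hE, hv0, hmem, hterm, rfl⟩
  apply le_antisymm
  · -- `R* ≤ C*`
    rw [GCS.CstarOpt]
    apply le_sInf
    rintro b ⟨k, v, x, ⟨hk, hE, hx⟩, hv0, hmem, hterm, rfl⟩
    obtain ⟨k', w, p1, p2, p3, p4, p5, p6, p7⟩ :=
      Stmt12Aux.exists_simple G pt S S' k v hk hE hmem hterm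
    have hw0 : w 0 = s := by rw [p5, hv0]
    have hwterm : w (k' - 1) ∈ S' := by rw [p4]; exact hterm
    have hk2 : 2 ≤ k' := by
      by_contra hlt
      have hk1 : k' = 1 := by omega
      have hws' : w 0 ∈ S' := by
        have : k' - 1 = 0 := by omega
        rwa [this] at hwterm
      rw [hw0] at hws'
      exact (Finset.disjoint_left.mp hdisj hs) hws'
    obtain ⟨y, α, z, z', hF, hobj⟩ :=
      Stmt12Aux.relax_of_simple (G := G) (pt := pt) (h := h) (S := S) (S' := S')
        hsing hs hdisj k' w hk2 p2 hw0 p3 hwterm p6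
    have hle : G.RstarOpt h s S S' ≤ ((G.relaxObj h S S' y α z z' : ℝ) : EReal) := by
      rw [GCS.RstarOpt]
      exact sInf_le ⟨y, α, z, z', hF, rfl⟩
    refine hle.trans ?_
    rw [hobj]
    apply EReal.coe_le_coe_iff.mpr
    have hxeq : pathCost k x = pathCost k (pt ∘ v) :=
      Stmt12Aux.pathCost_eq G pt hsing k v x hx
    rw [hxeq, p4]
    linarith [p7]
  · -- `C* ≤ R*`
    rw [GCS.RstarOpt]
    apply le_sInf
    rintro b ⟨y, α, z, z', hF, rfl⟩
    rw [Stmt12Aux.Cstar_eq hsing s hfeasD hne]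
    apply EReal.coe_le_coe_iff.mpr
    have hwd := Stmt12Aux.weak_duality (h := h) hsing hs hdisj hne y α z z' hF
    have hpot : Stmt12Aux.pot G pt h S S' s = sInf (Stmt12Aux.Dset G pt h S S' s) := by
      rw [Stmt12Aux.pot, if_pos hfeasD]
      rfl
    rw [← hpot]
    exact hwd
end

section
/- Let G=(V,E) be a graph of convex sets with origin s and destination d, and suppose there exists at least one path from s to d. Then C_opt(s,d) is finite and nonnegative, the infimum over all paths equals the infimum over simple paths (paths with no repeated vertices), and the infimum is attained: there exist a simple path (v_1=s, …, v_k=d) and points x_{v_i} ∈ X_{v_i} whose cost equals C_opt(s,d). -/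
open scoped BigOperators Pointwise Classical

namespace Stmt16Aux

variable {V : Type*} {n : ℕ}

lemma pathCost_nonneg (k : ℕ) (x : ℕ → EuclideanSpace ℝ (Fin n)) : 0 ≤ pathCost k x :=
  Finset.sum_nonneg fun _ _ => norm_nonneg _

lemma pathCost_congr {k : ℕ} {x y : ℕ → EuclideanSpace ℝ (Fin n)}
    (h : ∀ i < k, x i = y i) : pathCost k x = pathCost k y := by
  unfold pathCost
  refine Finset.sum_congr rfl fun i hi => ?_
  rw [Finset.mem_range] at hi
  rw [h i (by omega), h (i + 1) (by omega)]

lemma shortcut (G : GCS V n) (s d : V) (k : ℕ) :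
    ∀ (v : ℕ → V) (x : ℕ → EuclideanSpace ℝ (Fin n)),
      G.IsPathOn k v x → v 0 = s → v (k - 1) = d →
      ∃ (k' : ℕ) (v' : ℕ → V) (x' : ℕ → EuclideanSpace ℝ (Fin n)),
        G.IsPathOn k' v' x' ∧ (∀ i j, i < k' → j < k' → v' i = v' j → i = j) ∧
        v' 0 = s ∧ v' (k' - 1) = d ∧ pathCost k' x' ≤ pathCost k x := by
  induction k using Nat.strong_induction_on with
  | _ k ih =>
  intro v x hp h0 hd
  by_cases hinj : ∀ i j, i < k → j < k → v i = v j → i = j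
  · exact ⟨k, v, x, hp, hinj, h0, hd, le_rfl⟩
  push_neg at hinj
  obtain ⟨i0, j0, hi0, hj0, hv0, hne0⟩ := hinj
  obtain ⟨i, j, hij, hjk, hvij⟩ : ∃ i j, i < j ∧ j < k ∧ v i = v j := by
    rcases hne0.lt_or_gt with h | h
    · exact ⟨i0, j0, h, hj0, hv0⟩
    · exact ⟨j0, i0, h, hi0, hv0.symm⟩
  have hk1 : 1 ≤ k := hp.1
  have key : ∃ k', k' < k ∧ ∃ (v' : ℕ → V) (x' : ℕ → EuclideanSpace ℝ (Fin n)),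
      G.IsPathOn k' v' x' ∧ v' 0 = s ∧ v' (k' - 1) = d ∧
      pathCost k' x' ≤ pathCost k x := by
    by_cases hcase : j = k - 1
    · -- truncate at i
      refine ⟨i + 1, by omega, v, x, ⟨by omega, fun m hm => hp.2.1 m (by omega),
        fun m hm => hp.2.2 m (by omega)⟩, h0, ?_, ?_⟩
      · have : i + 1 - 1 = i := by omega
        rw [this, hvij, ← hd, hcase]
      · unfold pathCost
        refine Finset.sum_le_sum_of_subset_of_nonneg
          (Finset.range_subset_range.2 (by omega)) fun _ _ _ => norm_nonneg _
    · have hjk1 : j + 1 < k := by omega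
      set δ := j - i with hδ
      have hδ1 : 1 ≤ δ := by omega
      set v' : ℕ → V := fun m => if m ≤ i then v m else v (m + δ) with hv'
      set x' : ℕ → EuclideanSpace ℝ (Fin n) := fun m => if m ≤ i then x m else x (m + δ)
        with hx'
      have hv'1 : ∀ m, m ≤ i → v' m = v m := fun m h => by simp [hv', h]
      have hv'2 : ∀ m, ¬ m ≤ i → v' m = v (m + δ) := fun m h => by simp [hv', h]
      have hx'1 : ∀ m, m ≤ i → x' m = x m := fun m h => by simp [hx', h]
      have hx'2 : ∀ m, ¬ m ≤ i → x' m = x (m + δ) := fun m h => by simp [hx', h]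
      have hi1k : i + 1 ≤ k - δ - 1 := by omega
      refine ⟨k - δ, by omega, v', x', ⟨by omega, ?_, ?_⟩, ?_, ?_, ?_⟩
      · -- edges
        intro m hm
        by_cases h1 : m + 1 ≤ i
        · rw [hv'1 m (by omega), hv'1 (m + 1) h1]
          exact hp.2.1 m (by omega)
        · by_cases h2 : m ≤ i
          · have hmi : m = i := by omega
            rw [hv'1 m h2, hv'2 (m + 1) h1, hmi, show i + 1 + δ = j + 1 by omega, hvij]
            exact hp.2.1 j (by omega)
          · rw [hv'2 m h2, hv'2 (m + 1) h1, show m + 1 + δ = (m + δ) + 1 by omega]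
            exact hp.2.1 (m + δ) (by omega)
      · -- points
        intro m hm
        by_cases h2 : m ≤ i
        · rw [hv'1 m h2, hx'1 m h2]; exact hp.2.2 m (by omega)
        · rw [hv'2 m h2, hx'2 m h2]; exact hp.2.2 (m + δ) (by omega)
      · rw [hv'1 0 (by omega)]; exact h0
      · rw [hv'2 (k - δ - 1) (by omega), show k - δ - 1 + δ = k - 1 by omega]; exact hd
      · -- cost
        have tel : ‖x i - x (j + 1)‖ ≤ ∑ m ∈ Finset.Ico i (j + 1), ‖x m - x (m + 1)‖ := by
          simpa [dist_eq_norm] using dist_le_Ico_sum_dist x (show i ≤ j + 1 by omega)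
        have sum2 : ∑ m ∈ Finset.Ico (i + 1) (k - δ - 1), ‖x' m - x' (m + 1)‖
            = ∑ m ∈ Finset.Ico (j + 1) (k - 1), ‖x m - x (m + 1)‖ := by
          rw [show j + 1 = (i + 1) + δ by omega, show k - 1 = (k - δ - 1) + δ by omega,
            ← Finset.sum_Ico_add']
          refine Finset.sum_congr rfl fun m hm => ?_
          rw [Finset.mem_Ico] at hm
          rw [hx'2 m (by omega), hx'2 (m + 1) (by omega),
            show m + 1 + δ = m + δ + 1 by omega]
        have lhs_eq : pathCost (k - δ) x' =
            ((∑ m ∈ Finset.Ico 0 i, ‖x m - x (m + 1)‖) + ‖x i - x (j + 1)‖)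
              + ∑ m ∈ Finset.Ico (j + 1) (k - 1), ‖x m - x (m + 1)‖ := by
          have first : ∑ m ∈ Finset.Ico 0 i, ‖x' m - x' (m + 1)‖
              = ∑ m ∈ Finset.Ico 0 i, ‖x m - x (m + 1)‖ := by
            refine Finset.sum_congr rfl fun m hm => ?_
            rw [Finset.mem_Ico] at hm
            rw [hx'1 m (by omega), hx'1 (m + 1) (by omega)]
          unfold pathCost
          rw [Finset.range_eq_Ico,
            ← Finset.sum_Ico_consecutive _ (Nat.zero_le (i + 1)) hi1k, sum2,
            Finset.sum_Ico_succ_top (Nat.zero_le i), first, hx'1 i le_rfl,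
            hx'2 (i + 1) (by omega), show i + 1 + δ = j + 1 by omega]
        have rhs_eq : pathCost k x =
            ((∑ m ∈ Finset.Ico 0 i, ‖x m - x (m + 1)‖)
              + ∑ m ∈ Finset.Ico i (j + 1), ‖x m - x (m + 1)‖)
              + ∑ m ∈ Finset.Ico (j + 1) (k - 1), ‖x m - x (m + 1)‖ := by
          unfold pathCost
          rw [Finset.range_eq_Ico,
            ← Finset.sum_Ico_consecutive _ (Nat.zero_le i) (show i ≤ k - 1 by omega),
            ← Finset.sum_Ico_consecutive _ (show i ≤ j + 1 by omega)
              (show j + 1 ≤ k - 1 by omega)]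
          ring
        rw [lhs_eq, rhs_eq]
        gcongr
  obtain ⟨k', hk', v', x', hp', h0', hd', hc'⟩ := key
  obtain ⟨k'', v'', x'', hp'', hinj'', h0'', hd'', hc''⟩ := ih k' hk' v' x' hp' h0' hd'
  exact ⟨k'', v'', x'', hp'', hinj'', h0'', hd'', hc''.trans hc'⟩

variable [Fintype V]

def extV (s : V) (p : Σ k : Fin (Fintype.card V + 1), (Fin (k : ℕ) → V)) : ℕ → V :=
  fun i => if h : i < (p.1 : ℕ) then p.2 ⟨i, h⟩ else s

def Good (G : GCS V n) (s d : V)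
    (p : Σ k : Fin (Fintype.card V + 1), (Fin (k : ℕ) → V)) : Prop :=
  1 ≤ (p.1 : ℕ) ∧ (∀ i, i + 1 < (p.1 : ℕ) → (extV s p i, extV s p (i + 1)) ∈ G.E) ∧
  (∀ i j, i < (p.1 : ℕ) → j < (p.1 : ℕ) → extV s p i = extV s p j → i = j) ∧
  extV s p 0 = s ∧ extV s p ((p.1 : ℕ) - 1) = d

def Tset (G : GCS V n) (s d : V) : Set ℝ :=
  ⋃ p ∈ {p : Σ k : Fin (Fintype.card V + 1), (Fin (k : ℕ) → V) | Good G s d p},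
    pathCost (p.1 : ℕ) '' (Set.univ.pi fun i => G.X (extV s p i))

lemma continuous_pathCost (k : ℕ) :
    Continuous (pathCost (n := n) k) := by
  unfold pathCost
  exact continuous_finset_sum _ fun i _ =>
    ((continuous_apply i).sub (continuous_apply (i + 1))).norm

lemma Tset_compact (G : GCS V n) (s d : V) : IsCompact (Tset G s d) :=
  (Set.toFinite _).isCompact_biUnion fun p _ =>
    ((isCompact_univ_pi fun i => G.compact _).image (continuous_pathCost _))

lemma mem_Tset_of_simple (G : GCS V n) (s d : V) {k : ℕ} {v : ℕ → V}
    {x : ℕ → EuclideanSpace ℝ (Fin n)} (hp : G.IsPathOn k v x)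
    (hinj : ∀ i j, i < k → j < k → v i = v j → i = j) (h0 : v 0 = s) (hd : v (k - 1) = d) :
    pathCost k x ∈ Tset G s d := by
  have hkN : k ≤ Fintype.card V := by
    have hi : Function.Injective (fun i : Fin k => v i) := fun a b hab =>
      Fin.ext (hinj a b a.2 b.2 hab)
    simpa using Fintype.card_le_of_injective _ hi
  set p : Σ k : Fin (Fintype.card V + 1), (Fin (k : ℕ) → V) :=
    ⟨⟨k, by omega⟩, fun i => v i⟩ with hpdef
  have hp1 : (p.1 : ℕ) = k := rfl
  have hk1 : 1 ≤ k := hp.1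
  have hext : ∀ i, i < k → extV s p i = v i := by
    intro i hi
    unfold extV
    rw [dif_pos (by rw [hp1]; exact hi)]
  have hgood : Good G s d p := by
    refine ⟨by rw [hp1]; exact hp.1, ?_, ?_, ?_, ?_⟩
    · intro i hi
      rw [hp1] at hi
      rw [hext i (by omega), hext (i + 1) hi]
      exact hp.2.1 i hi
    · intro i j hi hj hij
      rw [hp1] at hi hj
      rw [hext i hi, hext j hj] at hij
      exact hinj i j hi hj hij
    · rw [hext 0 (by omega)]; exact h0
    · rw [hp1, hext (k - 1) (by omega)]; exact hd
  set xt : ℕ → EuclideanSpace ℝ (Fin n) :=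
    fun i => if h : i < k then x i else (G.nonempty (extV s p i)).some with hxt
  have hxmem : xt ∈ Set.univ.pi fun i => G.X (extV s p i) := by
    intro i _
    by_cases h : i < k
    · simp only [hxt, dif_pos h]
      rw [hext i h]
      exact hp.2.2 i h
    · simp only [hxt, dif_neg h]
      exact (G.nonempty _).some_mem
  have hcost : pathCost (p.1 : ℕ) xt = pathCost k x := by
    rw [hp1]
    exact pathCost_congr fun i hi => by simp [hxt, hi]
  exact Set.mem_biUnion hgood ⟨xt, hxmem, hcost⟩

lemma Tset_subset (G : GCS V n) (s d : V) {c : ℝ} (hc : c ∈ Tset G s d) :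
    ∃ (k : ℕ) (v : ℕ → V) (x : ℕ → EuclideanSpace ℝ (Fin n)),
      G.IsPathOn k v x ∧ (∀ i j, i < k → j < k → v i = v j → i = j) ∧
      v 0 = s ∧ v (k - 1) = d ∧ c = pathCost k x := by
  simp only [Tset, Set.mem_iUnion, Set.mem_image, Set.mem_setOf_eq] at hc
  obtain ⟨p, hgood, x, hx, hcx⟩ := hc
  exact ⟨(p.1 : ℕ), extV s p, x,
    ⟨hgood.1, hgood.2.1, fun i _ => hx i trivial⟩, hgood.2.2.1,
    hgood.2.2.2.1, hgood.2.2.2.2, hcx.symm⟩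

end Stmt16Aux

/-- If a path from `s` to `d` exists, then `C_opt(s,d)` is finite and
nonnegative, equals the infimum over simple paths, and is attained by some simple path
with optimally chosen points. -/
theorem stmt16 {V : Type*} [Fintype V] {n : ℕ} (G : GCS V n) (s d : V)
    (hpath : ∃ (k : ℕ) (v : ℕ → V) (x : ℕ → EuclideanSpace ℝ (Fin n)),
      G.IsPathOn k v x ∧ v 0 = s ∧ v (k - 1) = d) :
    G.Copt s d ≠ ⊤ ∧
    0 ≤ G.Copt s d ∧
    G.Copt s d = sInf {c : EReal | ∃ (k : ℕ) (v : ℕ → V)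
      (x : ℕ → EuclideanSpace ℝ (Fin n)),
      G.IsPathOn k v x ∧ (∀ i j, i < k → j < k → v i = v j → i = j) ∧
      v 0 = s ∧ v (k - 1) = d ∧ c = ((pathCost k x : ℝ) : EReal)} ∧
    ∃ (k : ℕ) (v : ℕ → V) (x : ℕ → EuclideanSpace ℝ (Fin n)),
      G.IsPathOn k v x ∧ (∀ i j, i < k → j < k → v i = v j → i = j) ∧
      v 0 = s ∧ v (k - 1) = d ∧ ((pathCost k x : ℝ) : EReal) = G.Copt s d := by
  classical
  obtain ⟨k0, v0, x0, hp0, h00, hd0⟩ := hpath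
  obtain ⟨k1, v1, x1, hp1, hinj1, h01, hd1, -⟩ :=
    Stmt16Aux.shortcut G s d k0 v0 x0 hp0 h00 hd0
  have hTc : IsCompact (Stmt16Aux.Tset G s d) := Stmt16Aux.Tset_compact G s d
  have hTne : (Stmt16Aux.Tset G s d).Nonempty :=
    ⟨_, Stmt16Aux.mem_Tset_of_simple G s d hp1 hinj1 h01 hd1⟩
  set m := sInf (Stmt16Aux.Tset G s d) with hm
  have hmT : m ∈ Stmt16Aux.Tset G s d := hTc.sInf_mem hTne
  obtain ⟨km, vm, xm, hpm, hinjm, h0m, hdm, hcm⟩ := Stmt16Aux.Tset_subset G s d hmT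
  have hm0 : 0 ≤ m := by rw [hcm]; exact Stmt16Aux.pathCost_nonneg km xm
  set B : Set EReal := {c : EReal | ∃ (k : ℕ) (v : ℕ → V)
      (x : ℕ → EuclideanSpace ℝ (Fin n)),
      G.IsPathOn k v x ∧ (∀ i j, i < k → j < k → v i = v j → i = j) ∧
      v 0 = s ∧ v (k - 1) = d ∧ c = ((pathCost k x : ℝ) : EReal)} with hB
  have hmB : (m : EReal) ∈ B := ⟨km, vm, xm, hpm, hinjm, h0m, hdm, by rw [hcm]⟩
  have hBlb : ∀ c ∈ B, (m : EReal) ≤ c := by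
    rintro c ⟨k, v, x, hp, hinj, h0, hd, rfl⟩
    exact_mod_cast csInf_le hTc.bddBelow
      (Stmt16Aux.mem_Tset_of_simple G s d hp hinj h0 hd)
  have hsB : sInf B = (m : EReal) := le_antisymm (sInf_le hmB) (le_sInf hBlb)
  have hCopt : G.Copt s d = (m : EReal) := by
    rw [GCS.Copt]
    refine le_antisymm ?_ ?_
    · rw [← hsB]
      refine sInf_le_sInf ?_
      rintro c ⟨k, v, x, hp, hinj, h0, hd, hc⟩
      exact ⟨k, v, x, hp, h0, hd, hc⟩
    · rw [← hsB]
      refine le_sInf ?_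
      rintro c ⟨k, v, x, hp, h0, hd, rfl⟩
      obtain ⟨k', v', x', hp', hinj', h0', hd', hle'⟩ :=
        Stmt16Aux.shortcut G s d k v x hp h0 hd
      exact le_trans
        (sInf_le (show _ ∈ B from ⟨k', v', x', hp', hinj', h0', hd', rfl⟩))
        (EReal.coe_le_coe_iff.2 hle')
  refine ⟨by rw [hCopt]; exact EReal.coe_ne_top m,
    by rw [hCopt]; exact_mod_cast hm0, hCopt.trans hsB.symm, ?_⟩
  exact ⟨km, vm, xm, hpm, hinjm, h0m, hdm, by rw [hCopt, hcm]⟩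
end
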